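/- arXiv:2310.06809 — 8 statements merged into one kernel-verified Lean document; each statement's English description precedes it below -/
import Mathlib

section
/- Let N be a positive integer, p a prime not dividing N, j an integer with 0 ≤ j < N, and (k₁,…,k_r) a tuple of positive integers of weight k = k₁+⋯+k_r. Then in ZMod p one has Σ_{jp/N < m₁ < ⋯ < m_r < (j+1)p/N} 1/(m₁^{k₁}⋯m_r^{k_r}) = N^k · Σ_{0 < n₁ < ⋯ < n_r < p, n_i ≡ −jp (mod N) for all i} 1/(n₁^{k₁}⋯n_r^{k_r}), where both sides are the images in ZMod p of the corresponding rational sums (all summands have denominator coprime to p). -/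
/-!
Multiplying by `N` and subtracting `jp` is an increasing bijection from the integers `m` with
`jp < Nm < (j+1)p` onto the integers `0 < n < p` with `n ≡ -jp (mod N)`. Applied coordinatewise
it matches the two index sets of strictly increasing tuples, and modulo `p` each factor changes
only by `N m ↦ N m - jp ≡ N m`, which contributes `N^{-k}` in total.
-/

open Finset

theorem filter_piFinset_and_forall {ι α : Type*} [Fintype ι] [DecidableEq ι] (s : Finset α)
    (P : (ι → α) → Prop) (Q : α → Prop) [DecidablePred P] [DecidablePred Q]
    [DecidablePred fun m : ι → α => P m ∧ ∀ i, Q (m i)] :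
    (Fintype.piFinset fun _ : ι => s).filter (fun m => P m ∧ ∀ i, Q (m i)) =
      (Fintype.piFinset fun _ => s.filter Q).filter P := by
  ext m
  simp only [mem_filter, Fintype.mem_piFinset]
  grind

theorem sum_filter_strictMono_comp {ι α β M : Type*} [Fintype ι] [DecidableEq ι] [Preorder ι]
    [LinearOrder α] [Preorder β] [DecidableEq β] [AddCommMonoid M]
    {s : Finset α} {t : Finset β} {f : α → β}
    [DecidablePred (StrictMono : (ι → α) → Prop)]
    [DecidablePred (StrictMono : (ι → β) → Prop)]
    (hf : StrictMonoOn f s) (hst : s.image f = t) (F : (ι → β) → M) :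
    ∑ m ∈ (Fintype.piFinset fun _ => s).filter StrictMono, F (f ∘ m) =
      ∑ n ∈ (Fintype.piFinset fun _ => t).filter StrictMono, F n := by
  refine sum_nbij (f ∘ ·) ?_ ?_ ?_ fun _ _ => rfl
  · simp only [mem_filter, Fintype.mem_piFinset, ← hst]
    exact fun m ⟨hs, hm⟩ => ⟨fun i => mem_image_of_mem f (hs i),
      fun i i' h => hf (hs i) (hs i') (hm h)⟩
  · intro m hm m' hm' h
    simp only [coe_filter, Fintype.mem_piFinset, Set.mem_ofPred_eq] at hm hm'
    exact funext fun i => hf.injOn (hm.1 i) (hm'.1 i) (congrFun h i)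
  · intro n hn
    simp only [coe_filter, Fintype.mem_piFinset, Set.mem_ofPred_eq, ← hst, mem_image] at hn
    choose m hms hmn using hn.1
    refine ⟨m, ?_, funext hmn⟩
    simp only [coe_filter, Fintype.mem_piFinset, Set.mem_ofPred_eq]
    refine ⟨hms, fun i i' h => (hf.lt_iff_lt (hms i) (hms i')).mp ?_⟩
    simpa only [hmn] using hn.2 h

theorem pow_sum_mul_prod_inv_mul_pow {ι K : Type*} [CommGroupWithZero K] (s : Finset ι)
    {c : K} (hc : c ≠ 0) (x : ι → K) (k : ι → ℕ) :
    c ^ (∑ i ∈ s, k i) * ∏ i ∈ s, ((c * x i) ^ k i)⁻¹ =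
      ∏ i ∈ s, (x i ^ k i)⁻¹ := by
  simp only [mul_pow, mul_inv, prod_mul_distrib, prod_inv_distrib,
    prod_pow_eq_pow_sum]
  exact mul_inv_cancel_left₀ (pow_ne_zero _ hc) _

theorem ZMod.natCast_eq_neg_iff_dvd_add {N n a : ℕ} :
    (n : ZMod N) = -(a : ZMod N) ↔ N ∣ n + a := by
  rw [eq_neg_iff_add_eq_zero, ← Nat.cast_add, ZMod.natCast_eq_zero_iff]

theorem ZMod.natCast_sub_mul_self {p x a : ℕ} (h : a * p ≤ x) :
    ((x - a * p : ℕ) : ZMod p) = x := by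
  rw [Nat.cast_sub h, Nat.cast_mul, ZMod.natCast_self, mul_zero, sub_zero]

section Shift

variable {N p j : ℕ}

theorem strictMonoOn_mul_sub_filter_Ioo :
    StrictMonoOn (fun m => N * m - j * p)
      ((Ioo 0 p).filter fun m => j * p < N * m ∧ N * m < (j + 1) * p) := by
  intro a ha b _ hab
  simp only [coe_filter, mem_Ioo, Set.mem_ofPred_eq] at ha
  have hN : 0 < N := Nat.pos_of_ne_zero (by rintro rfl; omega)
  have := Nat.mul_lt_mul_of_pos_left hab hN
  dsimp only
  omega

theorem image_mul_sub_filter_Ioo (hj : j < N) :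
    ((Ioo 0 p).filter fun m => j * p < N * m ∧ N * m < (j + 1) * p).image
        (fun m => N * m - j * p) =
      (Ioo 0 p).filter fun n : ℕ => (n : ZMod N) = -((j : ZMod N) * (p : ZMod N)) := by
  have hjp : (j + 1) * p = j * p + p := by ring
  ext n
  simp only [mem_image, mem_filter, mem_Ioo, ← Nat.cast_mul, ZMod.natCast_eq_neg_iff_dvd_add]
  constructor
  · rintro ⟨m, ⟨-, hlo, hhi⟩, rfl⟩
    exact ⟨⟨by omega, by omega⟩, m, by omega⟩
  · rintro ⟨⟨hn0, hnp⟩, m, hm⟩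
    have hm0 : 0 < m := Nat.pos_of_ne_zero (by rintro rfl; omega)
    have hmp : m < p := Nat.lt_of_mul_lt_mul_left (a := N) (by nlinarith)
    exact ⟨m, ⟨⟨hm0, hmp⟩, by omega, by omega⟩, by omega⟩

end Shift

open scoped Classical

theorem jSum_general (N p : ℕ) (hp : p.Prime) (hpN : ¬ p ∣ N)
    (j : ℕ) (hj : j < N) (r : ℕ) (k : Fin r → ℕ) :
    (∑ m ∈ (Fintype.piFinset fun _ : Fin r => Finset.Ioo 0 p).filter
        (fun m : Fin r → ℕ => StrictMono m ∧ ∀ i, j * p < N * m i ∧ N * m i < (j + 1) * p),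
      ∏ i, ((m i : ZMod p) ^ k i)⁻¹)
    = (N : ZMod p) ^ (∑ i, k i) *
      ∑ n ∈ (Fintype.piFinset fun _ : Fin r => Finset.Ioo 0 p).filter
        (fun n : Fin r → ℕ => StrictMono n ∧
          ∀ i, ((n i : ZMod N) = -((j : ZMod N) * (p : ZMod N)))),
      ∏ i, ((n i : ZMod p) ^ k i)⁻¹ := by
  have := Fact.mk hp
  have hN0 : (N : ZMod p) ≠ 0 := by rwa [Ne, ZMod.natCast_eq_zero_iff]
  rw [filter_piFinset_and_forall (Ioo 0 p) (StrictMono (α := Fin r))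
      (fun m => j * p < N * m ∧ N * m < (j + 1) * p),
    filter_piFinset_and_forall (Ioo 0 p) (StrictMono (α := Fin r))
      (fun n : ℕ => (n : ZMod N) = -((j : ZMod N) * (p : ZMod N))),
    ← sum_filter_strictMono_comp strictMonoOn_mul_sub_filter_Ioo
      (image_mul_sub_filter_Ioo hj) fun n => ∏ i, ((n i : ZMod p) ^ k i)⁻¹, mul_sum]
  refine sum_congr rfl fun m hm => ?_
  simp only [mem_filter, Fintype.mem_piFinset] at hm
  simp only [Function.comp_apply, ZMod.natCast_sub_mul_self (hm.1 _).2.1.le, Nat.cast_mul,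
    pow_sum_mul_prod_inv_mul_pow _ hN0]

/-- **Lemma 2.3 (j-sum).** For a prime `p` not dividing `N`, `0 ≤ j < N`, and an index
`(k₁,…,k_r)` of weight `k`, the sum of `1/(m₁^{k₁}⋯m_r^{k_r})` over strictly increasing tuples
with `jp/N < m₁ < ⋯ < m_r < (j+1)p/N` equals `N^k` times the sum over strictly increasing
tuples `0 < n₁ < ⋯ < n_r < p` with `n_i ≡ -jp (mod N)`, as elements of `ZMod p`. -/
theorem jSum (N p : ℕ) (hN : 0 < N) (hp : p.Prime) (hpN : ¬ p ∣ N)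
    (j : ℕ) (hj : j < N) (r : ℕ) (k : Fin r → ℕ) (hk : ∀ i, 0 < k i) :
    (∑ m ∈ (Fintype.piFinset fun _ : Fin r => Finset.Ioo 0 p).filter
        (fun m : Fin r → ℕ => StrictMono m ∧ ∀ i, j * p < N * m i ∧ N * m i < (j + 1) * p),
      ∏ i, ((m i : ZMod p) ^ k i)⁻¹)
    = (N : ZMod p) ^ (∑ i, k i) *
      ∑ n ∈ (Fintype.piFinset fun _ : Fin r => Finset.Ioo 0 p).filter
        (fun n : Fin r → ℕ => StrictMono n ∧
          ∀ i, ((n i : ZMod N) = -((j : ZMod N) * (p : ZMod N)))),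
      ∏ i, ((n i : ZMod p) ^ k i)⁻¹ :=
  jSum_general N p hp hpN j hj r k
end

section
/- Let N be a positive integer, p a prime not dividing N, (k₁,…,k_r) a tuple of positive integers of weight k = k₁+⋯+k_r, and α₁,…,α_r integers. Then in ZMod p one has Σ_{0 < m₁ < ⋯ < m_r < p, m_i ≡ α_i (mod N) for all i} 1/(m₁^{k₁}⋯m_r^{k_r}) = (−1)^k · Σ_{0 < n₁ < ⋯ < n_r < p, n_i ≡ p − α_{r+1−i} (mod N) for all i} 1/(n₁^{k_r}⋯n_r^{k_1}), i.e. the reversed index (k_r,…,k_1) appears on the right, with the i-th variable carrying exponent k_{r+1−i}. -/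
open Finset

open scoped Classical

/-!
The reflection `(m₁,…,m_r) ↦ (p - m_r,…,p - m₁)` is an involution exchanging the two ranges of
summation, and modulo `p` it turns each `1/m^k` into `(-1)^k/m^k`.
-/

def congrTuples (N p r : ℕ) (β : Fin r → ZMod N) : Finset (Fin r → ℕ) :=
  (Fintype.piFinset fun _ : Fin r => Ioo 0 p).filter
    fun m => StrictMono m ∧ ∀ i, (m i : ZMod N) = β i

def reflect {r : ℕ} (p : ℕ) (m : Fin r → ℕ) : Fin r → ℕ := fun i => p - m i.rev

section Reflect

variable {N p r : ℕ} {β : Fin r → ZMod N} {m : Fin r → ℕ}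

lemma mem_congrTuples :
    m ∈ congrTuples N p r β ↔
      (∀ i, 0 < m i ∧ m i < p) ∧ StrictMono m ∧ ∀ i, (m i : ZMod N) = β i := by
  simp only [congrTuples, mem_filter, Fintype.mem_piFinset, mem_Ioo]

lemma reflect_reflect (hm : ∀ i, m i ≤ p) : reflect p (reflect p m) = m := by
  funext i
  simp only [reflect, Fin.rev_rev]
  have := hm i
  omega

lemma strictMono_reflect (hm : StrictMono m) (hp : ∀ i, m i < p) :
    StrictMono (reflect p m) := fun a b hab => by
  have := hm (Fin.rev_lt_rev.mpr hab)
  have := hp a.rev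
  simp only [reflect]
  omega

lemma reflect_mem_congrTuples (hm : m ∈ congrTuples N p r β) :
    reflect p m ∈ congrTuples N p r (fun i => p - β i.rev) := by
  obtain ⟨hrange, hmono, hcongr⟩ := mem_congrTuples.mp hm
  refine mem_congrTuples.mpr ⟨fun i => ?_, strictMono_reflect hmono fun i => (hrange i).2,
    fun i => ?_⟩
  · have := hrange i.rev
    simp only [reflect]
    omega
  · rw [reflect, Nat.cast_sub (hrange i.rev).2.le, hcongr]

end Reflect

lemma prod_inv_pow_neg {ι K : Type*} [Fintype ι] [DivisionCommMonoid K] [HasDistribNeg K]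
    (x : ι → K) (k : ι → ℕ) :
    ∏ i, ((-x i) ^ k i)⁻¹ = (-1) ^ (∑ i, k i) * ∏ i, (x i ^ k i)⁻¹ := by
  simp only [neg_pow (x _), mul_inv, ← inv_pow, inv_neg, inv_one, prod_mul_distrib,
    prod_pow_eq_pow_sum]

lemma natCast_sub_eq_neg {p m : ℕ} (h : m ≤ p) : ((p - m : ℕ) : ZMod p) = -(m : ZMod p) := by
  rw [Nat.cast_sub h, ZMod.natCast_self, zero_sub]

lemma prod_inv_pow_reflect {p r : ℕ} [Fact p.Prime] {m : Fin r → ℕ} (hm : ∀ i, m i ≤ p)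
    (k : Fin r → ℕ) :
    ∏ i, ((reflect p m i : ZMod p) ^ k i.rev)⁻¹ =
      (-1) ^ (∑ i, k i) * ∏ i, ((m i : ZMod p) ^ k i)⁻¹ := by
  rw [← Equiv.prod_comp Fin.revPerm]
  simp only [Fin.revPerm_apply, reflect, Fin.rev_rev, natCast_sub_eq_neg (hm _), prod_inv_pow_neg]

theorem reversal_general (N p : ℕ) (hp : p.Prime)
    (r : ℕ) (k : Fin r → ℕ) (α : Fin r → ℤ) :
    (∑ m ∈ (Fintype.piFinset fun _ : Fin r => Finset.Ioo 0 p).filter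
        (fun m : Fin r → ℕ => StrictMono m ∧ ∀ i, ((m i : ZMod N) = ((α i : ℤ) : ZMod N))),
      ∏ i, ((m i : ZMod p) ^ k i)⁻¹)
    = (-1) ^ (∑ i, k i) *
      ∑ n ∈ (Fintype.piFinset fun _ : Fin r => Finset.Ioo 0 p).filter
        (fun n : Fin r → ℕ => StrictMono n ∧
          ∀ i, ((n i : ZMod N) = (p : ZMod N) - ((α i.rev : ℤ) : ZMod N))),
      ∏ i, ((n i : ZMod p) ^ k i.rev)⁻¹ := by
  have : Fact p.Prime := ⟨hp⟩
  set β : Fin r → ZMod N := fun i => ((α i : ℤ) : ZMod N)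
  have hβ : (fun i => (p : ZMod N) - (p - β i.rev.rev)) = β := by simp
  have hle {γ m} (hm : m ∈ congrTuples N p r γ) i : m i ≤ p :=
    ((mem_congrTuples.mp hm).1 i).2.le
  change ∑ m ∈ congrTuples N p r β, _ = _ * ∑ n ∈ congrTuples N p r (fun i => p - β i.rev), _
  rw [mul_sum]
  refine sum_nbij' (reflect p) (reflect p) (fun m hm => reflect_mem_congrTuples hm)
    (fun n hn => hβ ▸ reflect_mem_congrTuples hn) (fun m hm => reflect_reflect (hle hm))
    (fun n hn => reflect_reflect (hle hn)) fun m hm => ?_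
  rw [prod_inv_pow_reflect (hle hm), ← mul_assoc, ← pow_add, Even.neg_one_pow ⟨_, rfl⟩, one_mul]

/-- **Proposition 2.4 i) (reversal formula), prime-by-prime.** For a prime `p` not dividing `N`,
an index `(k₁,…,k_r)` of weight `k`, and integers `α₁,…,α_r`, the sum of
`1/(m₁^{k₁}⋯m_r^{k_r})` over `0 < m₁ < ⋯ < m_r < p` with `m_i ≡ α_i (mod N)` equals
`(-1)^k` times the sum over `0 < n₁ < ⋯ < n_r < p` with `n_i ≡ p - α_{r+1-i} (mod N)` of
`1/(n₁^{k_r}⋯n_r^{k_1})`, as elements of `ZMod p`. -/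
theorem reversal (N p : ℕ) (hN : 0 < N) (hp : p.Prime) (hpN : ¬ p ∣ N)
    (r : ℕ) (k : Fin r → ℕ) (hk : ∀ i, 0 < k i) (α : Fin r → ℤ) :
    (∑ m ∈ (Fintype.piFinset fun _ : Fin r => Finset.Ioo 0 p).filter
        (fun m : Fin r → ℕ => StrictMono m ∧ ∀ i, ((m i : ZMod N) = ((α i : ℤ) : ZMod N))),
      ∏ i, ((m i : ZMod p) ^ k i)⁻¹)
    = (-1) ^ (∑ i, k i) *
      ∑ n ∈ (Fintype.piFinset fun _ : Fin r => Finset.Ioo 0 p).filter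
        (fun n : Fin r → ℕ => StrictMono n ∧
          ∀ i, ((n i : ZMod N) = (p : ZMod N) - ((α i.rev : ℤ) : ZMod N))),
      ∏ i, ((n i : ZMod p) ^ k i.rev)⁻¹ :=
  reversal_general N p hp r k α
end

section
/- Let N be a positive integer, p a prime not dividing N, and (k₁,…,k_r) a tuple of positive integers of weight k. Then in ZMod p one has Σ_{0 < m₁ < ⋯ < m_r < p} 1/(m₁^{k₁}⋯m_r^{k_r}) = N^k · Σ_{0 ≤ i₁ ≤ ⋯ ≤ i_{N−1} ≤ r} Π_{j=0}^{N−1} ( Σ_{0 < n₁ < ⋯ < n_{i_{j+1}−i_j} < p, each n_t ≡ −jp (mod N)} Π_{t=1}^{i_{j+1}−i_j} 1/n_t^{k_{i_j+t}} ), where i₀ := 0, i_N := r, the outer sum is over all weakly increasing tuples (i₁,…,i_{N−1}) of integers between 0 and r, and an empty inner sum (when i_j = i_{j+1}) is defined to be 1. -/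
/-!
Multiplication by `N` sorts `(0, p)` into `N` consecutive blocks: `x` lies in block
`j = ⌊N x / p⌋`, and then `n = N x - j p` lies in `(0, p)` with `n ≡ -j p (mod N)`, while
`1 / x = N / n` in `ZMod p`. Conversely every such `n` comes from a unique `x` of block `j`.
An increasing tuple `m₁ < ⋯ < m_r` splits uniquely into consecutive runs lying in blocks
`0, 1, …, N - 1`; recording the run boundaries as a weak composition of `r` turns the sum
into a sum over compositions of products of block sums. On each block `x ↦ N x mod p` is
increasing, so it carries increasing tuples to increasing tuples, and each entry
contributes a factor `N^{k_i}`, which multiply to `N^k`.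
-/

open Finset

open scoped Classical

/-- The level-`N` piece: the sum over strictly increasing tuples
`0 < n₁ < ⋯ < n_{b-a} < p` with every `n_t ≡ -jp (mod N)` of
`∏_t 1/n_t^{k(a+t)}` (the exponents being the entries of `k` in positions `a, a+1, …, b-1`),
as an element of `ZMod p`.  When `b = a` this is the empty sum of an empty product, i.e. `1`. -/
noncomputable def levelPiece (p N : ℕ) (k : ℕ → ℕ) (j a b : ℕ) : ZMod p :=
  ∑ n ∈ (Fintype.piFinset fun _ : Fin (b - a) => Finset.Ioo 0 p).filter
      (fun n : Fin (b - a) → ℕ => StrictMono n ∧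
        ∀ t, ((n t : ZMod N) = -((j : ZMod N) * (p : ZMod N)))),
    ∏ t, ((n t : ZMod p) ^ k (a + (t : ℕ)))⁻¹

def increasingTuples (s : Finset ℕ) (r : ℕ) : Finset (Fin r → ℕ) :=
  (Fintype.piFinset fun _ => s).filter StrictMono

lemma mem_increasingTuples {s : Finset ℕ} {r : ℕ} {m : Fin r → ℕ} :
    m ∈ increasingTuples s r ↔ (∀ i, m i ∈ s) ∧ StrictMono m := by
  simp [increasingTuples]

-- Weak compositions of `r` into `N` parts, recorded by their partial sums `0 = f 0 ≤ ⋯ ≤ f N = r`.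
def compositions (N r : ℕ) : Finset (Fin (N + 1) → ℕ) :=
  (Fintype.piFinset fun _ : Fin (N + 1) => range (r + 1)).filter
    (fun f => Monotone f ∧ f 0 = 0 ∧ f (Fin.last N) = r)

lemma mem_compositions {N r : ℕ} {f : Fin (N + 1) → ℕ} :
    f ∈ compositions N r ↔ Monotone f ∧ f 0 = 0 ∧ f (Fin.last N) = r := by
  simp only [compositions, mem_filter, Fintype.mem_piFinset, mem_range, and_iff_right_iff_imp]
  rintro ⟨hf, -, hr⟩ c
  exact Nat.lt_succ_of_le (hr ▸ hf (Fin.le_last c))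

def extendByZero {r : ℕ} (m : Fin r → ℕ) (a : ℕ) : ℕ :=
  if h : a < r then m ⟨a, h⟩ else 0

lemma extendByZero_of_lt {r : ℕ} (m : Fin r → ℕ) {a : ℕ} (h : a < r) :
    extendByZero m a = m ⟨a, h⟩ :=
  dif_pos h

section Blocks

variable {N : ℕ} {f : Fin (N + 1) → ℕ}

lemma prod_prod_block_eq_prod_Ico {M : Type*} [CommMonoid M] (hf : Monotone f) (h : ℕ → M) :
    ∏ j : Fin N, ∏ t : Fin (f j.succ - f j.castSucc), h (f j.castSucc + t) =
      ∏ a ∈ Ico (f 0) (f (Fin.last N)), h a := by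
  have hIco (a b : ℕ) : ∏ t : Fin (b - a), h (a + t) = ∏ x ∈ Ico a b, h x := by
    rw [prod_Ico_eq_prod_range, Fin.prod_univ_eq_prod_range (fun t => h (a + t))]
  simp_rw [hIco]
  induction N with
  | zero => simp
  | succ N ih =>
    rw [Fin.prod_univ_castSucc, ← Fin.succ_last, ← prod_Ico_consecutive _ (hf (Fin.zero_le _))
      (hf Fin.castSucc_lt_succ.le)]
    simp only [Fin.succ_castSucc]
    exact congrArg (· * _) (ih (hf.comp (Fin.strictMono_castSucc).monotone))

lemma exists_mem_block {i : ℕ} (h0 : f 0 ≤ i) (hN : i < f (Fin.last N)) :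
    ∃ j : Fin N, f j.castSucc ≤ i ∧ i < f j.succ := by
  by_contra! h
  have hle : ∀ c, f c ≤ i := fun c => by
    induction c using Fin.induction with
    | zero => exact h0
    | succ j ih => exact h j ih
  exact (hle _).not_gt hN

lemma lt_iff_lt_of_mem_block (hf : Monotone f) {j : Fin N} {i : ℕ}
    (h1 : f j.castSucc ≤ i) (h2 : i < f j.succ) (c : Fin (N + 1)) : (j : ℕ) < c ↔ i < f c := by
  constructor
  · exact fun hc => h2.trans_le (hf (by rw [Fin.le_def, Fin.val_succ]; omega))
  · intro hc
    by_contra! hcj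
    exact lt_irrefl i (hc.trans_le ((hf (by rw [Fin.le_def, Fin.val_castSucc]; omega)).trans h1))

lemma eq_of_mem_block (hf : Monotone f) {j j' : Fin N} {i : ℕ}
    (h : f j.castSucc ≤ i ∧ i < f j.succ) (h' : f j'.castSucc ≤ i ∧ i < f j'.succ) : j = j' := by
  have := (lt_iff_lt_of_mem_block hf h.1 h.2 j'.succ).2 h'.2
  have := (lt_iff_lt_of_mem_block hf h'.1 h'.2 j.succ).2 h.2
  simp only [Fin.val_succ] at *
  omega

-- Blocks are disjoint (`eq_of_mem_block`), so at most one summand is nonzero.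
def concatBlocks (f : Fin (N + 1) → ℕ) (n : ∀ j : Fin N, Fin (f j.succ - f j.castSucc) → ℕ)
    (i : ℕ) : ℕ :=
  ∑ j : Fin N, if h : f j.castSucc ≤ i ∧ i < f j.succ then n j ⟨i - f j.castSucc, by omega⟩ else 0

lemma concatBlocks_of_mem_block (hf : Monotone f)
    (n : ∀ j : Fin N, Fin (f j.succ - f j.castSucc) → ℕ) {j : Fin N} {i : ℕ}
    (h1 : f j.castSucc ≤ i) (h2 : i < f j.succ) :
    concatBlocks f n i = n j ⟨i - f j.castSucc, by omega⟩ := by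
  rw [concatBlocks, sum_eq_single j, dif_pos ⟨h1, h2⟩]
  · exact fun j' _ hj' => dif_neg fun h => hj' (eq_of_mem_block hf h ⟨h1, h2⟩)
  · simp

end Blocks

section BlockBoundaries

variable {β : ℕ → ℕ} {N r : ℕ}

-- For increasing `m` these are the boundaries of the runs of `m` in the successive levels of `β`.
def blockBoundaries (β : ℕ → ℕ) (N : ℕ) {r : ℕ} (m : Fin r → ℕ) (c : Fin (N + 1)) : ℕ :=
  #{i | β (m i) < c}

lemma blockBoundaries_mem_compositions {m : Fin r → ℕ} (hm : ∀ i, β (m i) < N) :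
    blockBoundaries β N m ∈ compositions N r := by
  refine mem_compositions.2 ⟨fun c c' hc => ?_, by simp [blockBoundaries], ?_⟩
  · exact card_le_card (monotone_filter_right _ fun i _ h => h.trans_le hc)
  · simp [blockBoundaries, hm]

lemma apply_eq_of_blockBoundaries_eq {m : Fin r → ℕ} (hm : Monotone (β ∘ m))
    {f : Fin (N + 1) → ℕ} (hf : blockBoundaries β N m = f) {j : Fin N} {i : Fin r}
    (h1 : f j.castSucc ≤ i) (h2 : (i : ℕ) < f j.succ) : β (m i) = j := by
  have key (c : Fin (N + 1)) : (i : ℕ) < f c ↔ β (m i) < c := by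
    rw [← hf]
    exact Fin.lt_card_filter_univ_iff_apply_of_imp _ fun a b hba hlt => (hm hba).trans_lt hlt
  have := (key j.succ).1 h2
  have := (key j.castSucc).not.1 h1.not_gt
  simp only [Fin.val_succ, Fin.val_castSucc] at *
  omega

lemma blockBoundaries_eq {m : Fin r → ℕ} {f : Fin (N + 1) → ℕ} (hf : f ∈ compositions N r)
    (h : ∀ (j : Fin N) (i : Fin r), f j.castSucc ≤ i → (i : ℕ) < f j.succ → β (m i) = j) :
    blockBoundaries β N m = f := by
  obtain ⟨hmono, h0, hr⟩ := mem_compositions.1 hf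
  funext c
  have hiff (i : Fin r) : β (m i) < c ↔ (i : ℕ) < f c := by
    obtain ⟨j, h1, h2⟩ := exists_mem_block (h0 ▸ Nat.zero_le i) (hr ▸ i.isLt)
    rw [h j i h1 h2]
    exact lt_iff_lt_of_mem_block hmono h1 h2 c
  rw [blockBoundaries, filter_congr fun i _ => hiff i, Fin.card_filter_val_lt,
    min_eq_right (hr ▸ hmono (Fin.le_last c))]

end BlockBoundaries

section Decomposition

variable {R : Type*} [CommSemiring R] {β : ℕ → ℕ} {N r : ℕ} {s : Finset ℕ}

lemma concatBlocks_mem_increasingTuples (hβ : Monotone β) {f : Fin (N + 1) → ℕ}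
    (hf : f ∈ compositions N r) {n : ∀ j : Fin N, Fin (f j.succ - f j.castSucc) → ℕ}
    (hn : ∀ j : Fin N, n j ∈ increasingTuples {x ∈ s | β x = j} (f j.succ - f j.castSucc)) :
    (fun i : Fin r => concatBlocks f n i) ∈ increasingTuples s r ∧
      blockBoundaries β N (fun i : Fin r => concatBlocks f n i) = f := by
  obtain ⟨hmono, h0, hr⟩ := mem_compositions.1 hf
  simp only [mem_increasingTuples, mem_filter] at hn ⊢
  have hval (i : Fin r) : ∃ j : Fin N, f j.castSucc ≤ i ∧ (i : ℕ) < f j.succ ∧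
      concatBlocks f n i ∈ s ∧ β (concatBlocks f n i) = j := by
    obtain ⟨j, h1, h2⟩ := exists_mem_block (f := f) (i := i) (by omega) (by omega)
    rw [concatBlocks_of_mem_block hmono n h1 h2]
    exact ⟨j, h1, h2, (hn j).1 _⟩
  refine ⟨⟨fun i => ?_, fun i i' hii' => ?_⟩, blockBoundaries_eq hf fun j i h1 h2 => ?_⟩
  · obtain ⟨j, -, -, hs, -⟩ := hval i
    exact hs
  · obtain ⟨j, h1, h2, -, hj⟩ := hval i
    obtain ⟨j', h1', h2', -, hj'⟩ := hval i'
    have hjj' : j ≤ j' := by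
      have := (lt_iff_lt_of_mem_block hmono h1 h2 j'.succ).2 ((Fin.lt_def.1 hii').trans h2')
      rw [Fin.le_def]; simp only [Fin.val_succ] at this; omega
    rcases hjj'.lt_or_eq with hlt | rfl
    · exact hβ.reflect_lt (hj ▸ hj' ▸ hlt)
    · simp only [concatBlocks_of_mem_block hmono n h1 h2, concatBlocks_of_mem_block hmono n h1' h2']
      exact (hn j).2 (Fin.mk_lt_mk.2 (by rw [Fin.lt_def] at hii'; omega))
  · rw [concatBlocks_of_mem_block hmono n h1 h2]
    exact ((hn j).1 _).2

lemma sum_filter_blockBoundaries_eq (hβ : Monotone β) {f : Fin (N + 1) → ℕ}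
    (hf : f ∈ compositions N r) (g : ℕ → ℕ → R) :
    ∑ m ∈ increasingTuples s r with blockBoundaries β N m = f, ∏ i : Fin r, g i (m i) =
      ∏ j : Fin N, ∑ n ∈ increasingTuples {x ∈ s | β x = j} (f j.succ - f j.castSucc),
        ∏ t : Fin _, g (f j.castSucc + t) (n t) := by
  obtain ⟨hmono, h0, hr⟩ := mem_compositions.1 hf
  have hblock (i : Fin r) : ∃ j : Fin N, f j.castSucc ≤ i ∧ (i : ℕ) < f j.succ :=
    exists_mem_block (by omega) (by omega)
  have hidx (j : Fin N) (t : Fin (f j.succ - f j.castSucc)) : f j.castSucc + t < r := by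
    have := hmono (Fin.le_last j.succ)
    omega
  rw [prod_univ_sum]
  refine sum_nbij' (fun m j t => extendByZero m (f j.castSucc + t)) (fun n i => concatBlocks f n i)
    ?_ ?_ ?_ ?_ ?_
  · simp only [mem_filter, mem_increasingTuples, Fintype.mem_piFinset]
    rintro m ⟨⟨hms, hm⟩, hmf⟩ j
    simp only [extendByZero_of_lt _ (hidx j _)]
    refine ⟨fun t => ⟨hms _, apply_eq_of_blockBoundaries_eq (hβ.comp hm.monotone) hmf
      (Nat.le_add_right _ _) (by have := t.isLt; simp only; omega)⟩,
      fun t t' htt => hm (Fin.mk_lt_mk.2 (Nat.add_lt_add_left htt _))⟩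
  · intro n hn
    exact mem_filter.2 (concatBlocks_mem_increasingTuples hβ hf (Fintype.mem_piFinset.1 hn))
  · intro m _
    funext i
    obtain ⟨j, h1, h2⟩ := hblock i
    rw [concatBlocks_of_mem_block hmono _ h1 h2, extendByZero_of_lt _ (by simp only; omega)]
    congr 1; ext; simp only; omega
  · intro n _
    funext j t
    rw [extendByZero_of_lt _ (hidx j t), concatBlocks_of_mem_block hmono n (Nat.le_add_right _ _)
      (by have := t.isLt; omega)]
    congr 1; ext; simp only; omega
  · intro m _
    rw [prod_prod_block_eq_prod_Ico hmono (fun a => g a (extendByZero m a)), h0, hr,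
      Nat.Ico_zero_eq_range, ← Fin.prod_univ_eq_prod_range]
    simp only [extendByZero_of_lt _ (Fin.isLt _)]

theorem sum_increasingTuples_eq_sum_compositions (hβ : Monotone β) (hs : ∀ x ∈ s, β x < N)
    (g : ℕ → ℕ → R) :
    ∑ m ∈ increasingTuples s r, ∏ i : Fin r, g i (m i) =
      ∑ f ∈ compositions N r, ∏ j : Fin N,
        ∑ n ∈ increasingTuples {x ∈ s | β x = j} (f j.succ - f j.castSucc),
          ∏ t : Fin _, g (f j.castSucc + t) (n t) := by
  rw [← sum_fiberwise_of_maps_to fun m hm =>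
    blockBoundaries_mem_compositions fun i => hs _ ((mem_increasingTuples.1 hm).1 i)]
  exact sum_congr rfl fun f hf => sum_filter_blockBoundaries_eq hβ hf g

end Decomposition

lemma sum_increasingTuples_comp {M : Type*} [AddCommMonoid M] {s t : Finset ℕ} {e e' : ℕ → ℕ}
    (he : StrictMonoOn e s) (hst : ∀ x ∈ s, e x ∈ t) (hts : ∀ y ∈ t, e' y ∈ s)
    (hl : ∀ x ∈ s, e' (e x) = x) (hr : ∀ y ∈ t, e (e' y) = y) {r : ℕ} (F : (Fin r → ℕ) → M) :
    ∑ m ∈ increasingTuples s r, F (e ∘ m) = ∑ n ∈ increasingTuples t r, F n := by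
  refine sum_nbij' (e ∘ ·) (e' ∘ ·) ?_ ?_ ?_ ?_ fun _ _ => rfl <;>
    simp only [mem_increasingTuples, Function.comp_apply]
  · rintro m ⟨hms, hm⟩
    exact ⟨fun i => hst _ (hms i), fun i i' hii' => he (hms i) (hms i') (hm hii')⟩
  · rintro n ⟨hnt, hn⟩
    refine ⟨fun i => hts _ (hnt i), fun i i' hii' => ?_⟩
    refine (he.lt_iff_lt (hts _ (hnt i)) (hts _ (hnt i'))).1 ?_
    simpa [hr _ (hnt i), hr _ (hnt i')] using hn hii'
  · exact fun m ⟨hms, _⟩ => funext fun i => hl _ (hms i)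
  · exact fun n ⟨hnt, _⟩ => funext fun i => hr _ (hnt i)

section Rescaling

variable {p N j : ℕ}

lemma mul_mod_mem_Ioo (hp : p.Prime) (hpN : ¬ p ∣ N) {x : ℕ} (hx : x ∈ Ioo 0 p) :
    N * x % p ∈ Ioo 0 p := by
  rw [mem_Ioo] at hx ⊢
  refine ⟨Nat.pos_of_ne_zero fun h => ?_, Nat.mod_lt _ hp.pos⟩
  rcases hp.dvd_mul.1 (Nat.dvd_of_mod_eq_zero h) with h | h
  · exact hpN h
  · exact (Nat.le_of_dvd hx.1 h).not_gt hx.2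

lemma natCast_mul_mod (p N x : ℕ) :
    ((N * x % p : ℕ) : ZMod N) = -(((N * x / p : ℕ) : ZMod N) * p) := by
  have := congrArg (Nat.cast : ℕ → ZMod N) (Nat.div_add_mod' (N * x) p)
  push_cast [ZMod.natCast_self] at this
  linear_combination this

lemma mul_div_eq_of_natCast_eq {n : ℕ} (hn : (n : ZMod N) = -((j : ZMod N) * p)) :
    N * ((j * p + n) / N) = j * p + n :=
  Nat.mul_div_cancel' ((ZMod.natCast_eq_zero_iff _ N).1 (by push_cast; rw [hn]; ring))

lemma div_mem_Ioo_of_natCast_eq (hj : j < N) {n : ℕ} (hn : n ∈ Ioo 0 p)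
    (hcong : (n : ZMod N) = -((j : ZMod N) * p)) : (j * p + n) / N ∈ Ioo 0 p := by
  have h := mul_div_eq_of_natCast_eq hcong
  rw [mem_Ioo] at hn ⊢
  refine ⟨Nat.pos_of_ne_zero fun h0 => ?_, Nat.lt_of_mul_lt_mul_left (a := N) ?_⟩
  · rw [h0] at h; omega
  · rw [h]; nlinarith

-- On the `j`-th block `x ↦ N x mod p = N x - j p` is increasing, with inverse `n ↦ (j p + n) / N`.
lemma sum_increasingTuples_mul_mod {M : Type*} [AddCommMonoid M] (hp : p.Prime) (hpN : ¬ p ∣ N)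
    (hj : j < N) {r : ℕ} (F : (Fin r → ℕ) → M) :
    ∑ m ∈ increasingTuples {x ∈ Ioo 0 p | N * x / p = j} r, F (fun t => N * m t % p) =
      ∑ n ∈ increasingTuples {n ∈ Ioo 0 p | (n : ZMod N) = -((j : ZMod N) * p)} r, F n := by
  have hN : 0 < N := Nat.pos_of_ne_zero (by rintro rfl; exact hpN (dvd_zero p))
  have hdecomp {x : ℕ} (hx : N * x / p = j) : j * p + N * x % p = N * x := by
    rw [← hx]; exact Nat.div_add_mod' _ _
  refine sum_increasingTuples_comp (e := fun x => N * x % p) (e' := fun n => (j * p + n) / N)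
    ?_ ?_ ?_ ?_ ?_ F
  · intro x hx y hy hxy
    simp only [coe_filter, Set.mem_ofPred_eq] at hx hy
    have := Nat.mul_lt_mul_left hN |>.2 hxy
    have := hdecomp hx.2
    have := hdecomp hy.2
    show N * x % p < N * y % p
    omega
  · intro x hx
    rw [mem_filter] at hx ⊢
    exact ⟨mul_mod_mem_Ioo hp hpN hx.1, hx.2 ▸ natCast_mul_mod p N x⟩
  · intro n hn
    rw [mem_filter] at hn ⊢
    refine ⟨div_mem_Ioo_of_natCast_eq hj hn.1 hn.2, ?_⟩
    rw [mul_div_eq_of_natCast_eq hn.2]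
    exact Nat.div_eq_of_lt_le le_self_add (by have := (mem_Ioo.1 hn.1).2; rw [add_mul]; omega)
  · intro x hx
    show (j * p + N * x % p) / N = x
    rw [hdecomp (mem_filter.1 hx).2, Nat.mul_div_cancel_left x hN]
  · intro n hn
    rw [mem_filter, mem_Ioo] at hn
    show N * ((j * p + n) / N) % p = n
    rw [mul_div_eq_of_natCast_eq hn.2, mul_comm j p, Nat.mul_add_mod, Nat.mod_eq_of_lt hn.1.2]

end Rescaling

lemma levelPiece_eq_sum_increasingTuples (p N : ℕ) (k : ℕ → ℕ) (j a b : ℕ) :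
    levelPiece p N k j a b =
      ∑ n ∈ increasingTuples {x ∈ Ioo 0 p | (x : ZMod N) = -((j : ZMod N) * p)} (b - a),
        ∏ t : Fin _, ((n t : ZMod p) ^ k (a + t))⁻¹ := by
  unfold levelPiece
  congr 1
  ext n
  simp only [mem_filter, mem_increasingTuples, Fintype.mem_piFinset, forall_and]
  tauto

lemma sum_block_eq_mul_levelPiece {p N : ℕ} (hp : p.Prime) (hpN : ¬ p ∣ N) (k : ℕ → ℕ) {j : ℕ}
    (hj : j < N) (a b : ℕ) :
    ∑ n ∈ increasingTuples {x ∈ Ioo 0 p | N * x / p = j} (b - a),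
        ∏ t : Fin _, ((n t : ZMod p) ^ k (a + t))⁻¹ =
      (∏ t : Fin (b - a), (N : ZMod p) ^ k (a + t)) * levelPiece p N k j a b := by
  have := Fact.mk hp
  have hN : (N : ZMod p) ≠ 0 := by rwa [Ne, ZMod.natCast_eq_zero_iff]
  have hscale (n : Fin (b - a) → ℕ) : ∏ t, ((n t : ZMod p) ^ k (a + t))⁻¹ =
      (∏ t : Fin (b - a), (N : ZMod p) ^ k (a + t)) *
        ∏ t, (((N * n t % p : ℕ) : ZMod p) ^ k (a + t))⁻¹ := by
    rw [← prod_mul_distrib]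
    refine prod_congr rfl fun t _ => ?_
    rw [ZMod.natCast_mod, Nat.cast_mul, mul_pow, mul_inv, ← mul_assoc,
      mul_inv_cancel₀ (pow_ne_zero _ hN), one_mul]
  rw [sum_congr rfl fun n _ => hscale n, ← mul_sum, levelPiece_eq_sum_increasingTuples,
    sum_increasingTuples_mul_mod hp hpN hj fun n => ∏ t, ((n t : ZMod p) ^ k (a + t))⁻¹]

theorem levelDecomposition_general (N p : ℕ) (hp : p.Prime) (hpN : ¬ p ∣ N)
    (r : ℕ) (k : ℕ → ℕ) :
    (∑ m ∈ (Fintype.piFinset fun _ : Fin r => Finset.Ioo 0 p).filter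
        (fun m : Fin r → ℕ => StrictMono m),
      ∏ i, ((m i : ZMod p) ^ k (i : ℕ))⁻¹)
    = (N : ZMod p) ^ (∑ i ∈ Finset.range r, k i) *
      ∑ f ∈ (Fintype.piFinset fun _ : Fin (N + 1) => Finset.range (r + 1)).filter
          (fun f : Fin (N + 1) → ℕ => Monotone f ∧ f 0 = 0 ∧ f (Fin.last N) = r),
        ∏ j : Fin N, levelPiece p N k (j : ℕ) (f j.castSucc) (f j.succ) := by
  have hβ : Monotone fun x => N * x / p := fun x y hxy =>
    Nat.div_le_div_right (Nat.mul_le_mul_left N hxy)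
  have hlt (x : ℕ) (hx : x ∈ Ioo 0 p) : N * x / p < N :=
    (Nat.div_lt_iff_lt_mul hp.pos).2 (Nat.mul_lt_mul_of_pos_left (mem_Ioo.1 hx).2
      (Nat.pos_of_ne_zero (by rintro rfl; exact hpN (dvd_zero p))))
  rw [mul_sum]
  refine (sum_increasingTuples_eq_sum_compositions hβ hlt
    (fun i x => ((x : ZMod p) ^ k i)⁻¹)).trans (sum_congr rfl fun f hf => ?_)
  obtain ⟨hmono, h0, hr⟩ := mem_compositions.1 hf
  rw [prod_congr rfl fun j _ => sum_block_eq_mul_levelPiece hp hpN k j.isLt _ _, prod_mul_distrib,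
    prod_prod_block_eq_prod_Ico hmono fun a => (N : ZMod p) ^ k a, h0, hr, prod_pow_eq_pow_sum,
    Nat.Ico_zero_eq_range]

/-- **Proposition 2.4 ii), prime-by-prime.** For a prime `p` not dividing `N` and an index
`(k₀,…,k_{r-1})` of weight `k`, the truncated multiple harmonic sum
`Σ_{0<m₁<⋯<m_r<p} 1/(m₁^{k₀}⋯m_r^{k_{r-1}})` equals `N^k` times the sum, over all weakly
increasing tuples `0 = i₀ ≤ i₁ ≤ ⋯ ≤ i_{N-1} ≤ i_N = r` (encoded as monotone maps
`f : Fin (N+1) → ℕ` with `f 0 = 0` and `f N = r`), of the products over `j = 0,…,N-1` of the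
level-`N` pieces attached to `j` on the segment of the index from position `i_j` to `i_{j+1}`,
in `ZMod p`. -/
theorem levelDecomposition (N p : ℕ) (hN : 0 < N) (hp : p.Prime) (hpN : ¬ p ∣ N)
    (r : ℕ) (k : ℕ → ℕ) (hk : ∀ i < r, 0 < k i) :
    (∑ m ∈ (Fintype.piFinset fun _ : Fin r => Finset.Ioo 0 p).filter
        (fun m : Fin r → ℕ => StrictMono m),
      ∏ i, ((m i : ZMod p) ^ k (i : ℕ))⁻¹)
    = (N : ZMod p) ^ (∑ i ∈ Finset.range r, k i) *
      ∑ f ∈ (Fintype.piFinset fun _ : Fin (N + 1) => Finset.range (r + 1)).filter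
          (fun f : Fin (N + 1) → ℕ => Monotone f ∧ f 0 = 0 ∧ f (Fin.last N) = r),
        ∏ j : Fin N, levelPiece p N k (j : ℕ) (f j.castSucc) (f j.succ) :=
  levelDecomposition_general N p hp hpN r k
end

section
/- Assume that there are infinitely many primes p such that p² does not divide 2^{p−1} − 1 (i.e., infinitely many non-Wieferich primes). Then for every even positive integer N and every positive integer k, there exist r ≥ 1, positive integers k₁,…,k_r with k₁+⋯+k_r = k, and a function c from the units (ℤ/Nℤ)ˣ to Option((ℤ/Nℤ)^r), such that the set of primes p with p ∤ N, c(p mod N) = some (α₁,…,α_r), and Σ_{0 < m₁ < ⋯ < m_r < p, m_i ≡ α_i (mod N) for all i} 1/(m₁^{k₁}⋯m_r^{k_r}) nonzero in ZMod p, is infinite. -/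
/-!
For `0 < j < p` one has `j * (C(p,j)/p) = C(p-1,j-1) ≡ (-1)^(j-1) (mod p)`, and
`p * Σ_{0<j<p} C(p,j)/p = 2^p - 2`. Hence the alternating harmonic sum `Σ_{0<m<p} (-1)^m/m` is
`-2` times the Fermat quotient `(2^(p-1) - 1)/p` modulo `p`, which is nonzero exactly when `p` is
non-Wieferich.

Put `x_m = (-1)^m/m`. For a list `l = [k₁, …, k_r]`, the sum
`M_l = Σ_{0<m₁<⋯<m_r<p} Π x_{m_i}^{k_i}` satisfies the stuffle relation
`M_[1] * M_l = Σ_{l' ∈ stuffleOne l} M_{l'}`. Since `M_[1] ≠ 0`, induction on `k` gives a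
composition of `k` with `M ≠ 0`. Because `N` is even, the sign `(-1)^m` only depends on `m mod N`,
so `M_l` is a signed sum of the colored sums of level `N`, and one of these is nonzero. Finally,
only finitely many triples (composition, colors, `p mod N`) are possible, so one of them works for
infinitely many non-Wieferich primes `p`.
-/

open Finset

open scoped Classical

theorem Nat.Prime.cast_choose_sub_one {p : ℕ} (hp : p.Prime) {i : ℕ} (hi : i < p) :
    (((p - 1).choose i : ℕ) : ZMod p) = (-1) ^ i := by
  induction i with
  | zero => simp
  | succ i ih =>
    have hdvd : ((p.choose (i + 1) : ℕ) : ZMod p) = 0 :=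
      (ZMod.natCast_eq_zero_iff _ _).2 (hp.dvd_choose_self i.succ_ne_zero hi)
    have hpascal := Nat.choose_succ_succ' (p - 1) i
    rw [Nat.sub_add_cancel hp.one_le] at hpascal
    rw [hpascal, Nat.cast_add, ih (by omega)] at hdvd
    rw [pow_succ]
    linear_combination hdvd

theorem Nat.Prime.cast_choose_div_self_mul {p j : ℕ} (hp : p.Prime) (hj : j ∈ Ioo 0 p) :
    ((p.choose j / p : ℕ) : ZMod p) * j = (-1) ^ (j - 1) := by
  obtain ⟨hj0, hjp⟩ := mem_Ioo.1 hj
  have hmul : p.choose j / p * j = (p - 1).choose (j - 1) := by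
    have h := Nat.add_one_mul_choose_eq (p - 1) (j - 1)
    rw [Nat.sub_add_cancel hp.one_le, Nat.sub_add_cancel hj0,
      ← Nat.mul_div_cancel' (hp.dvd_choose_self hj0.ne' hjp), mul_assoc] at h
    exact (Nat.eq_of_mul_eq_mul_left hp.pos h).symm
  rw [← Nat.cast_mul, hmul, hp.cast_choose_sub_one (by omega)]

theorem Nat.sum_Ioo_choose {n : ℕ} (hn : 0 < n) : ∑ j ∈ Ioo 0 n, n.choose j = 2 ^ n - 2 := by
  have h := Nat.sum_range_choose n
  rw [range_eq_Ico, sum_eq_sum_Ico_succ_bot (by omega), sum_Ico_succ_top (by omega),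
    Ico_add_one_left_eq_Ioo, Nat.choose_zero_right, Nat.choose_self] at h
  omega

theorem ZMod.sum_neg_one_pow_div_ne_zero {p : ℕ} [Fact p.Prime] (hp2 : p ≠ 2)
    (hW : ¬ p ^ 2 ∣ 2 ^ (p - 1) - 1) : ∑ j ∈ Ioo 0 p, (-1 : ZMod p) ^ j / j ≠ 0 := by
  have hp : p.Prime := Fact.out
  set A := ∑ j ∈ Ioo 0 p, p.choose j / p
  have hpA : p * A = 2 * (2 ^ (p - 1) - 1) := by
    have h2p : 2 ^ p = 2 * 2 ^ (p - 1) := by rw [← pow_succ', Nat.sub_add_cancel hp.one_le]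
    rw [mul_sum, sum_congr rfl fun j hj => Nat.mul_div_cancel'
      (hp.dvd_choose_self (mem_Ioo.1 hj).1.ne' (mem_Ioo.1 hj).2), Nat.sum_Ioo_choose hp.pos]
    omega
  have hA : (A : ZMod p) = -∑ j ∈ Ioo 0 p, (-1 : ZMod p) ^ j / j := by
    rw [Nat.cast_sum, ← sum_neg_distrib]
    refine sum_congr rfl fun j hj => ?_
    have hj0 : (j : ZMod p) ≠ 0 := by
      rw [Ne, ZMod.natCast_eq_zero_iff]
      exact fun h => (Nat.le_of_dvd (mem_Ioo.1 hj).1 h).not_gt (mem_Ioo.1 hj).2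
    rw [← neg_div, eq_div_iff hj0, hp.cast_choose_div_self_mul hj]
    obtain ⟨i, rfl⟩ : ∃ i, j = i + 1 := ⟨j - 1, by have := (mem_Ioo.1 hj).1; omega⟩
    rw [Nat.add_sub_cancel, pow_succ]
    ring
  intro h
  obtain ⟨c, hc⟩ := (ZMod.natCast_eq_zero_iff A p).1 (by rw [hA, h, neg_zero])
  have hdvd : p ^ 2 ∣ 2 * (2 ^ (p - 1) - 1) := hpA ▸ ⟨c, by rw [hc]; ring⟩
  exact hW (((Nat.coprime_primes hp Nat.prime_two).2 hp2).pow_left 2 |>.dvd_of_dvd_mul_left hdvd)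

theorem Nat.sum_Ioo_eq_add_add_of_mem {M : Type*} [AddCommMonoid M] (f : ℕ → M) {b m n : ℕ}
    (hm : m ∈ Ioo b n) :
    ∑ i ∈ Ioo b n, f i = ∑ i ∈ Ioo b m, f i + f m + ∑ i ∈ Ioo m n, f i := by
  obtain ⟨hbm, hmn⟩ := mem_Ioo.1 hm
  rw [← Ico_add_one_left_eq_Ioo, ← Ico_add_one_left_eq_Ioo, ← Ico_add_one_left_eq_Ioo,
    ← sum_Ico_consecutive f (show b + 1 ≤ m from hbm) hmn.le, sum_eq_sum_Ico_succ_bot hmn,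
    add_assoc]

section MonomialQSym

variable {R : Type*} [CommSemiring R] (x : ℕ → R) (n : ℕ)

/-- `monomialQSym x n b [k₁, …, k_r] = Σ_{b<m₁<⋯<m_r<n} x m₁ ^ k₁ ⋯ x m_r ^ k_r`, the
monomial
quasisymmetric function `M_(k₁,…,k_r)` evaluated at `x (b+1), …, x (n-1)`. -/
def monomialQSym : ℕ → List ℕ → R
  | _, [] => 1
  | b, κ :: t => ∑ m ∈ Ioo b n, x m ^ κ * monomialQSym m t

/-- The stuffle (quasi-shuffle) product of the one-letter word `[1]` with a word. -/
def stuffleOne : List ℕ → Multiset (List ℕ)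
  | [] => {[1]}
  | κ :: t => (1 :: κ :: t) ::ₘ ((κ + 1) :: t) ::ₘ (stuffleOne t).map (κ :: ·)

theorem sum_of_mem_stuffleOne {l l' : List ℕ} (h : l' ∈ stuffleOne l) : l'.sum = l.sum + 1 := by
  induction l generalizing l' with
  | nil => simp_all [stuffleOne]
  | cons κ t ih =>
    simp only [stuffleOne, Multiset.mem_cons, Multiset.mem_map] at h
    rcases h with rfl | rfl | ⟨t', ht', rfl⟩
    · simp [add_comm]
    · simp [add_right_comm]
    · simp [ih ht', add_assoc]

theorem pos_of_mem_stuffleOne {l l' : List ℕ} (hl : ∀ κ ∈ l, 0 < κ)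
    (h : l' ∈ stuffleOne l) : ∀ κ ∈ l', 0 < κ := by
  induction l generalizing l' with
  | nil => simp_all [stuffleOne]
  | cons κ t ih =>
    simp only [List.mem_cons, forall_eq_or_imp] at hl
    simp only [stuffleOne, Multiset.mem_cons, Multiset.mem_map] at h
    rcases h with rfl | rfl | ⟨t', ht', rfl⟩
    · simpa using hl
    · simpa using hl.2
    · simpa using ⟨hl.1, ih hl.2 ht'⟩

@[simp]
theorem monomialQSym_nil (b : ℕ) : monomialQSym x n b [] = 1 := rfl

theorem monomialQSym_cons (b κ : ℕ) (t : List ℕ) :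
    monomialQSym x n b (κ :: t) = ∑ m ∈ Ioo b n, x m ^ κ * monomialQSym x n m t := rfl

theorem monomialQSym_one (b : ℕ) : monomialQSym x n b [1] = ∑ m ∈ Ioo b n, x m := by
  simp [monomialQSym_cons]

theorem monomialQSym_one_mul (b : ℕ) (l : List ℕ) :
    monomialQSym x n b [1] * monomialQSym x n b l =
      ((stuffleOne l).map (monomialQSym x n b)).sum := by
  induction l generalizing b with
  | nil => simp [stuffleOne]
  | cons κ t ih =>
    have hsplit : ∀ m ∈ Ioo b n,
        (∑ m₀ ∈ Ioo b n, x m₀) * (x m ^ κ * monomialQSym x n m t) =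
          (∑ m₀ ∈ Ioo b m, x m₀) * (x m ^ κ * monomialQSym x n m t)
          + x m ^ (κ + 1) * monomialQSym x n m t
          + x m ^ κ * (monomialQSym x n m [1] * monomialQSym x n m t) := fun m hm => by
      rw [Nat.sum_Ioo_eq_add_add_of_mem x hm, monomialQSym_one]
      ring
    have hlt :
        ∑ m ∈ Ioo b n, (∑ m₀ ∈ Ioo b m, x m₀) * (x m ^ κ * monomialQSym x n m t) =
          monomialQSym x n b (1 :: κ :: t) := by
      simp only [monomialQSym_cons, pow_one, sum_mul, mul_sum]
      refine sum_comm' fun m m₀ => ?_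
      simp only [mem_Ioo]
      omega
    rw [monomialQSym_one, monomialQSym_cons, mul_sum, sum_congr rfl hsplit, sum_add_distrib,
      sum_add_distrib, hlt]
    simp only [ih, ← Multiset.sum_map_mul_left, ← Multiset.sum_map_sum, stuffleOne,
      Multiset.map_cons, Multiset.sum_cons, Multiset.map_map, Function.comp_def, add_assoc]
    rfl

theorem exists_monomialQSym_ne_zero [NoZeroDivisors R] {b : ℕ} (h : ∑ m ∈ Ioo b n, x m ≠ 0)
    (k : ℕ) : ∃ c : Composition k, monomialQSym x n b c.blocks ≠ 0 := by
  induction k with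
  | zero =>
    have : Nontrivial R := ⟨⟨_, _, h⟩⟩
    exact ⟨⟨[], by simp, rfl⟩, by simp⟩
  | succ k ih =>
    obtain ⟨c, hc⟩ := ih
    have hone : monomialQSym x n b [1] ≠ 0 := by rwa [monomialQSym_one]
    have hprod := mul_ne_zero hone hc
    rw [monomialQSym_one_mul] at hprod
    obtain ⟨l, hl, hne⟩ : ∃ l ∈ stuffleOne c.blocks, monomialQSym x n b l ≠ 0 := by
      by_contra! hzero
      exact hprod (Multiset.sum_eq_zero fun y hy => by
        obtain ⟨l, hl, rfl⟩ := Multiset.mem_map.1 hy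
        exact hzero l hl)
    exact ⟨⟨l, pos_of_mem_stuffleOne (fun _ => c.blocks_pos) hl _,
      by rw [sum_of_mem_stuffleOne hl, c.blocks_sum]⟩, hne⟩

theorem monomialQSym_eq_sum (b : ℕ) (l : List ℕ) :
    monomialQSym x n b l = ∑ m ∈ (Fintype.piFinset fun _ : Fin l.length => Ioo b n).filter
      StrictMono, ∏ i, x (m i) ^ l.get i := by
  induction l generalizing b with
  | nil => simp [Subsingleton.strictMono]
  | cons κ t ih =>
    simp only [monomialQSym_cons, ih, mul_sum]
    rw [sum_sigma']
    refine sum_nbij' (fun m => Fin.cons m.1 m.2) (fun m => ⟨m 0, Fin.tail m⟩) ?_ ?_ ?_ ?_ ?_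
    · rintro ⟨m₀, m⟩ hm
      simp only [mem_sigma, mem_filter, Fintype.mem_piFinset, mem_Ioo] at hm ⊢
      refine ⟨fun i => Fin.cases hm.1 (fun j => ?_) i,
        Fin.strictMono_cons.2 ⟨fun j => (hm.2.1 j).1, hm.2.2⟩⟩
      exact ⟨hm.1.1.trans (hm.2.1 j).1, (hm.2.1 j).2⟩
    · intro m hm
      simp only [mem_sigma, mem_filter, Fintype.mem_piFinset, mem_Ioo] at hm ⊢
      exact ⟨hm.1 0, fun i => ⟨hm.2 (Fin.succ_pos i), (hm.1 i.succ).2⟩,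
        hm.2.comp (Fin.strictMono_succ)⟩
    · intro m _
      simp
    · intro m _
      simp
    · intro m _
      simp [Fin.prod_univ_succ]

end MonomialQSym

/-- For `K = ZMod p` and `n = p`, the `p`-component of a finite multiple zeta value of level `N`.
Only a bare `Inv` is assumed so that `K = ZMod p` is allowed for every `p`. -/
def coloredHarmonicSum (K : Type*) [CommSemiring K] [Inv K] (N n : ℕ) {r : ℕ}
    (ks : Fin r → ℕ) (α : Fin r → ZMod N) : K :=
  ∑ m ∈ (Fintype.piFinset fun _ : Fin r => Ioo 0 n).filter
      (fun m : Fin r → ℕ => StrictMono m ∧ ∀ i, (m i : ZMod N) = α i),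
    ∏ i, ((m i : K) ^ ks i)⁻¹

theorem monomialQSym_mul_inv_eq_sum {K : Type*} [Semifield K] {N : ℕ} [NeZero N]
    (w : ZMod N → K) (n : ℕ) (l : List ℕ) :
    monomialQSym (fun m => w m * (m : K)⁻¹) n 0 l =
      ∑ α, (∏ i, w (α i) ^ l.get i) * coloredHarmonicSum K N n l.get α := by
  rw [monomialQSym_eq_sum, ← sum_fiberwise _ (fun m i => (m i : ZMod N))]
  refine sum_congr rfl fun α _ => ?_
  rw [coloredHarmonicSum, mul_sum, filter_filter]
  refine sum_congr (by simp [funext_iff]) fun m hm => ?_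
  have hα : ∀ i, (m i : ZMod N) = α i := (mem_filter.1 hm).2.2
  simp only [mul_pow, inv_pow, prod_mul_distrib, hα]

theorem neg_one_pow_val_natCast {R : Type*} [Monoid R] [HasDistribNeg R] {N : ℕ} (hN : Even N)
    (m : ℕ) : (-1 : R) ^ (m : ZMod N).val = (-1) ^ m := by
  conv_rhs => rw [← Nat.mod_add_div m N, pow_add, pow_mul, hN.neg_one_pow, one_pow, mul_one]
  rw [ZMod.val_natCast]

theorem exists_coloredHarmonicSum_ne_zero {N : ℕ} [NeZero N] (hN : Even N) {p : ℕ}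
    [Fact p.Prime] (hp2 : p ≠ 2) (hW : ¬ p ^ 2 ∣ 2 ^ (p - 1) - 1) (k : ℕ) :
    ∃ c : Composition k, ∃ α : Fin c.length → ZMod N,
      coloredHarmonicSum (ZMod p) N p c.blocksFun α ≠ 0 := by
  have hx : ∑ m ∈ Ioo 0 p, (-1 : ZMod p) ^ (m : ZMod N).val * (m : ZMod p)⁻¹ ≠ 0 := by
    simpa only [neg_one_pow_val_natCast hN, div_eq_mul_inv] using
      ZMod.sum_neg_one_pow_div_ne_zero hp2 hW
  obtain ⟨c, hc⟩ := exists_monomialQSym_ne_zero _ p hx k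
  rw [monomialQSym_mul_inv_eq_sum (fun β => (-1) ^ β.val)] at hc
  obtain ⟨α, -, hα⟩ := exists_ne_zero_of_sum_ne_zero hc
  exact ⟨c, α, right_ne_zero_of_mul hα⟩

theorem Set.Infinite.exists_infinite_of_subset_iUnion {α ι : Type*} [Finite ι] {s : Set α}
    {t : ι → Set α} (hs : s.Infinite) (h : s ⊆ ⋃ i, t i) : ∃ i, (t i).Infinite := by
  by_contra! hfin
  exact hs ((Set.finite_iUnion hfin).subset h)

/-- **Proposition 2.6 ii).** If there are infinitely many non-Wieferich primes (primes `p` with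
`p² ∤ 2^{p-1} - 1`), then for every even positive integer `N` and every positive integer `k`
there are an index `(k₁,…,k_r)`, `r ≥ 1`, of weight `k` and a color map
`c : (ℤ/Nℤ)ˣ → Option ((ℤ/Nℤ)^r)` such that for infinitely many primes `p ∤ N` the `p`-component
of the corresponding finite multiple zeta value of level `N`, namely
`Σ_{0<m₁<⋯<m_r<p, m_i ≡ α_i (mod N)} 1/(m₁^{k₁}⋯m_r^{k_r})` where `c(p mod N) = some α`, is
nonzero in `ZMod p`. -/
theorem nonzero_fmzv_level_of_infinitely_many_nonWieferich
    (hW : {p : ℕ | p.Prime ∧ ¬ (p ^ 2 ∣ 2 ^ (p - 1) - 1)}.Infinite) :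
    ∀ N : ℕ, 0 < N → Even N → ∀ k : ℕ, 0 < k →
      ∃ r : ℕ, 0 < r ∧ ∃ ks : Fin r → ℕ, (∀ i, 0 < ks i) ∧ (∑ i, ks i) = k ∧
        ∃ c : (ZMod N)ˣ → Option (Fin r → ZMod N),
          {p : ℕ | p.Prime ∧ ¬ p ∣ N ∧
            ∃ (u : (ZMod N)ˣ) (α : Fin r → ZMod N), (u : ZMod N) = (p : ZMod N) ∧
              c u = some α ∧
              (∑ m ∈ (Fintype.piFinset fun _ : Fin r => Finset.Ioo 0 p).filter
                  (fun m : Fin r → ℕ => StrictMono m ∧ ∀ i, ((m i : ZMod N) = α i)),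
                ∏ i, ((m i : ZMod p) ^ ks i)⁻¹) ≠ 0}.Infinite := by
  intro N hN hNeven k hk
  have : NeZero N := ⟨hN.ne'⟩
  have hS : ({p : ℕ | p.Prime ∧ ¬ (p ^ 2 ∣ 2 ^ (p - 1) - 1)} \ {p | p ∣ N}).Infinite :=
    hW.sdiff (N.divisors.finite_toSet.subset fun _ hp => Nat.mem_divisors.2 ⟨hp, hN.ne'⟩)
  have hcover : {p : ℕ | p.Prime ∧ ¬ (p ^ 2 ∣ 2 ^ (p - 1) - 1)} \ {p | p ∣ N} ⊆
      ⋃ i : (Σ c : Composition k, Fin c.length → ZMod N) × (ZMod N)ˣ,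
        {p : ℕ | p.Prime ∧ ¬ p ∣ N ∧ (i.2 : ZMod N) = p ∧
          coloredHarmonicSum (ZMod p) N p i.1.1.blocksFun i.1.2 ≠ 0} := by
    rintro p ⟨⟨hp, hpW⟩, hpN⟩
    have : Fact p.Prime := ⟨hp⟩
    have hp2 : p ≠ 2 := fun h => hpN (h ▸ hNeven.two_dvd)
    obtain ⟨c, α, hne⟩ := exists_coloredHarmonicSum_ne_zero hNeven hp2 hpW k
    have hcop : p.Coprime N := (Nat.Prime.coprime_iff_not_dvd hp).2 hpN
    exact Set.mem_iUnion.2 ⟨(⟨c, α⟩, ZMod.unitOfCoprime p hcop), hp, hpN, rfl, hne⟩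
  obtain ⟨⟨⟨c, α⟩, u⟩, hinf⟩ := hS.exists_infinite_of_subset_iUnion hcover
  refine ⟨c.length, c.length_pos_of_pos hk, c.blocksFun, c.one_le_blocksFun, c.sum_blocksFun,
    fun v => if v = u then some α else none, hinf.mono ?_⟩
  rintro p ⟨hp, hpN, hu, hne⟩
  exact ⟨hp, hpN, u, α, hu, if_pos rfl, hne⟩
end

section
/- Let N be a positive integer and p an odd prime not dividing N. Then in ZMod p one has (N+1) · q_p(2) ≡ − Σ_{0 ≤ j < N/2} Σ_{2jp/(2N) < m < (2j+1)p/(2N)} 1/m, where q_p(2) = (2^{p−1} − 1)/p ∈ ℤ, the outer sum is over integers j with 0 ≤ j < N/2, and the inner sums of reciprocals are rational numbers with denominator coprime to p viewed in ZMod p. -/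
open Finset

open scoped Classical

/-!
Let `S` be the sum of `x⁻¹` over the `x ∈ ZMod p` such that both `x` and `N x` lie in the lower
half `{x | 2 x.val < p}`. The double sum equals `S`: an `m` with `0 < m < p` lies in
`(2jp/2N, (2j+1)p/2N)` for some `j < N/2` exactly when `2m < p` and `2 (N m mod p) < p`, and then
`j = ⌊Nm/p⌋`. Inclusion–exclusion for the two lower halves, together with `∑ x⁻¹ = 0`, the
symmetry `x ↦ -x` (which swaps the two halves and negates `x⁻¹`) and the substitution `x ↦ N x`,
gives `2S = (1 + N) L`, where `L` is the sum of `x⁻¹` over the lower half. Finally, Eisenstein's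
congruence `L = -2 q_p(2)` comes from `(p choose k)/p ≡ (-1)^(k-1)/k` and
`∑_{0<k<p} (p choose k) = 2^p - 2`.
-/

section InverseSums

theorem sum_inv_filter_congr {K : Type*} [DivisionRing K] {s : Finset K} {P Q : K → Prop}
    [DecidablePred P] [DecidablePred Q] (h : ∀ x ∈ s, x ≠ 0 → (P x ↔ Q x)) :
    ∑ x ∈ s with P x, x⁻¹ = ∑ x ∈ s with Q x, x⁻¹ := by
  rw [sum_filter, sum_filter]
  refine sum_congr rfl fun x hx => ?_
  obtain rfl | hx0 := eq_or_ne x 0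
  · simp
  · simp only [h x hx hx0]

variable {K : Type*} [DivisionRing K] [Fintype K]

theorem sum_inv_filter_neg (P : K → Prop) [DecidablePred P] :
    ∑ x with P (-x), x⁻¹ = -∑ x with P x, x⁻¹ := by
  rw [← sum_neg_distrib]
  exact sum_nbij' (- ·) (- ·) (by simp) (by simp) (by simp) (by simp) (by simp [inv_neg])

theorem sum_inv_eq_zero (h2 : (2 : K) ≠ 0) : ∑ x : K, x⁻¹ = 0 := by
  have h := sum_inv_filter_neg (K := K) fun _ => True
  simp only [filter_true] at h
  have h2S : (2 : K) * ∑ x : K, x⁻¹ = 0 := by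
    rw [two_mul]
    nth_rewrite 1 [h]
    exact neg_add_cancel _
  exact (mul_eq_zero.mp h2S).resolve_left h2

end InverseSums

theorem sum_inv_filter_mul_left {F : Type*} [Field F] [Fintype F] (P : F → Prop)
    [DecidablePred P] {a : F} (ha : a ≠ 0) :
    ∑ x with P (a * x), x⁻¹ = a * ∑ y with P y, y⁻¹ := by
  rw [mul_sum]
  refine sum_nbij' (a * ·) (a⁻¹ * ·) (by simp) (by simp [ha]) (by simp [ha]) (by simp [ha])
    fun x _ => ?_
  rw [mul_inv, ← mul_assoc, mul_inv_cancel₀ ha, one_mul]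

theorem sum_filter_add_sum_filter {ι M : Type*} [AddCommGroup M] (s : Finset ι)
    (A B : ι → Prop) [DecidablePred A] [DecidablePred B] (f : ι → M) :
    ∑ i ∈ s with A i, f i + ∑ i ∈ s with B i, f i
      = ∑ i ∈ s with A i ∧ B i, f i + ∑ i ∈ s, f i - ∑ i ∈ s with ¬A i ∧ ¬B i, f i := by
  simp only [sum_filter, ← sum_add_distrib, ← sum_sub_distrib]
  refine sum_congr rfl fun i _ => ?_
  by_cases hA : A i <;> by_cases hB : B i <;> simp [hA, hB]

namespace ZMod

variable {p : ℕ}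

theorem sum_Ioo_natCast_eq_sum [NeZero p] {M : Type*} [AddCommMonoid M] (f : ZMod p → M)
    (hf : f 0 = 0) : ∑ m ∈ Ioo 0 p, f m = ∑ x : ZMod p, f x := by
  rw [← sum_erase univ hf]
  refine sum_nbij' (↑) val ?_ ?_ ?_ ?_ (fun _ _ => rfl)
  · intro m hm
    simp only [mem_Ioo] at hm
    simp [← val_eq_zero, val_cast_of_lt hm.2, hm.1.ne']
  · intro x hx
    simp only [mem_erase, mem_univ, and_true] at hx
    simp [Nat.pos_of_ne_zero ((val_ne_zero x).mpr hx), val_lt]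
  · intro m hm
    exact val_cast_of_lt (mem_Ioo.mp hm).2
  · intro x _
    exact natCast_zmod_val x

theorem sum_filter_Ioo_inv_natCast [NeZero p] (P : ℕ → Prop) [DecidablePred P] :
    ∑ m ∈ Ioo 0 p with P m, (m : ZMod p)⁻¹ = ∑ x : ZMod p with P x.val, x⁻¹ := by
  rw [sum_filter, sum_filter, ← sum_Ioo_natCast_eq_sum _ (by simp [ZMod.inv_zero])]
  refine sum_congr rfl fun m hm => ?_
  rw [val_cast_of_lt (mem_Ioo.mp hm).2]

theorem val_natCast_mul (N : ℕ) (x : ZMod p) : ((N : ZMod p) * x).val = N * x.val % p := by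
  rw [val_mul, val_natCast, Nat.mod_mul_mod]

theorem even_val_two_mul_iff (hodd : Odd p) (x : ZMod p) :
    Even (2 * x).val ↔ 2 * x.val < p := by
  have : NeZero p := ⟨hodd.pos.ne'⟩
  have hx := x.val_lt
  have hpmod := Nat.odd_iff.mp hodd
  rw [show (2 : ZMod p) = ((2 : ℕ) : ZMod p) by simp, val_natCast_mul, Nat.even_iff]
  by_cases h : 2 * x.val < p
  · rw [Nat.mod_eq_of_lt h]; omega
  · rw [Nat.mod_eq_sub_mod (not_lt.mp h), Nat.mod_eq_of_lt (a := 2 * x.val - p) (by omega)]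
    omega

theorem two_mul_val_neg_lt_iff (hodd : Odd p) {x : ZMod p} (hx : x ≠ 0) :
    2 * (-x).val < p ↔ ¬2 * x.val < p := by
  have : NeZero p := ⟨hodd.pos.ne'⟩
  have : NeZero x := ⟨hx⟩
  have := x.val_lt
  have := Nat.odd_iff.mp hodd
  rw [val_neg_of_ne_zero]
  omega

theorem two_ne_zero_of_odd [Fact p.Prime] (hodd : Odd p) : (2 : ZMod p) ≠ 0 :=
  Ring.two_ne_zero ((ringChar_zmod_n p).substr (by rintro rfl; exact absurd hodd (by decide)))

end ZMod

section Eisenstein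

variable {p : ℕ}

theorem cast_choose_prime_sub_one (hp : p.Prime) {j : ℕ} (hj : j < p) :
    (((p - 1).choose j : ℕ) : ZMod p) = (-1) ^ j := by
  induction j with
  | zero => simp
  | succ j ih =>
    have hpascal : p.choose (j + 1) = (p - 1).choose j + (p - 1).choose (j + 1) := by
      rw [← Nat.choose_succ_succ', Nat.sub_add_cancel hp.one_le]
    have hzero : ((p.choose (j + 1) : ℕ) : ZMod p) = 0 :=
      (ZMod.natCast_eq_zero_iff _ _).mpr (hp.dvd_choose_self j.succ_ne_zero hj)
    rw [hpascal, Nat.cast_add, ih (by omega)] at hzero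
    rw [pow_succ]
    linear_combination hzero

theorem cast_choose_prime_div [hp : Fact p.Prime] {k : ℕ} (hk0 : 0 < k) (hkp : k < p) :
    ((p.choose k / p : ℕ) : ZMod p) = -((-1) ^ k * (k : ZMod p)⁻¹) := by
  obtain ⟨j, rfl⟩ : ∃ j, k = j + 1 := ⟨k - 1, by omega⟩
  have hdvd : p ∣ p.choose (j + 1) := hp.out.dvd_choose_self j.succ_ne_zero hkp
  have hdiv : p.choose (j + 1) / p * (j + 1) = (p - 1).choose j := by
    have h := Nat.add_one_mul_choose_eq (p - 1) j
    rw [Nat.sub_add_cancel hp.out.one_le, ← Nat.div_mul_cancel hdvd] at h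
    apply Nat.eq_of_mul_eq_mul_left hp.out.pos
    rw [h]
    ring
  have hk : ((j + 1 : ℕ) : ZMod p) ≠ 0 := by
    rw [Ne, ZMod.natCast_eq_zero_iff]
    exact Nat.not_dvd_of_pos_of_lt j.succ_pos hkp
  have hcast := congrArg (Nat.cast : ℕ → ZMod p) hdiv
  rw [Nat.cast_mul, cast_choose_prime_sub_one hp.out (by omega)] at hcast
  rw [eq_neg_iff_add_eq_zero, pow_succ, ← hcast]
  field_simp
  ring

theorem dvd_two_pow_sub_one_sub_one [Fact p.Prime] (hodd : Odd p) : p ∣ 2 ^ (p - 1) - 1 := by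
  rw [← ZMod.natCast_eq_zero_iff, Nat.cast_sub Nat.one_le_two_pow, Nat.cast_pow, Nat.cast_ofNat,
    ZMod.pow_card_sub_one_eq_one (ZMod.two_ne_zero_of_odd hodd), Nat.cast_one, sub_self]

theorem sum_choose_prime_div [hp : Fact p.Prime] (hodd : Odd p) :
    ∑ k ∈ Ioo 0 p, p.choose k / p = 2 * ((2 ^ (p - 1) - 1) / p) := by
  have hsum : ∑ k ∈ Ioo 0 p, p.choose k = 2 * (2 ^ (p - 1) - 1) := by
    have h := Nat.sum_range_choose p
    rw [sum_range_succ, sum_range_eq_add_Ico _ hp.out.pos, ← zero_add 1, Ico_add_one_left_eq_Ioo,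
      Nat.choose_zero_right, Nat.choose_self] at h
    have h2 : 2 ^ p = 2 * 2 ^ (p - 1) := by rw [← pow_succ', Nat.sub_add_cancel hp.out.one_le]
    have := @Nat.one_le_two_pow (p - 1)
    omega
  rw [← Nat.sum_div fun k hk => hp.out.dvd_choose_self (mem_Ioo.mp hk).1.ne' (mem_Ioo.mp hk).2,
    hsum, Nat.mul_div_assoc _ (dvd_two_pow_sub_one_sub_one hodd)]

theorem ZMod.sum_neg_one_pow_val_mul_inv [Fact p.Prime] (hodd : Odd p) :
    ∑ x : ZMod p, (-1) ^ x.val * x⁻¹ = ∑ x : ZMod p with 2 * x.val < p, x⁻¹ := by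
  have hsplit : ∀ x : ZMod p,
      (-1) ^ x.val * x⁻¹ = 2 * (if Even x.val then x⁻¹ else 0) - x⁻¹ := by
    intro x
    by_cases he : Even x.val
    · rw [if_pos he, he.neg_one_pow]; ring
    · rw [if_neg he, (Nat.not_even_iff_odd.mp he).neg_one_pow]; ring
  have hdouble := sum_inv_filter_mul_left (fun y : ZMod p => Even y.val)
    (ZMod.two_ne_zero_of_odd hodd)
  simp only [ZMod.even_val_two_mul_iff hodd] at hdouble
  rw [sum_congr rfl fun x _ => hsplit x, sum_sub_distrib, ← mul_sum, ← sum_filter,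
    sum_inv_eq_zero (ZMod.two_ne_zero_of_odd hodd), sub_zero, hdouble]

/-- Eisenstein's congruence. -/
theorem ZMod.sum_inv_lower_half [Fact p.Prime] (hodd : Odd p) :
    ∑ x : ZMod p with 2 * x.val < p, x⁻¹ = -(2 * (((2 ^ (p - 1) - 1) / p : ℕ) : ZMod p)) := by
  have hbinom := congrArg (Nat.cast : ℕ → ZMod p) (sum_choose_prime_div hodd)
  rw [Nat.cast_sum, Nat.cast_mul, Nat.cast_ofNat] at hbinom
  rw [← hbinom, ← sum_neg_one_pow_val_mul_inv hodd,
    ← sum_Ioo_natCast_eq_sum (fun x : ZMod p => (-1) ^ x.val * x⁻¹) (by simp), ← sum_neg_distrib]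
  refine sum_congr rfl fun k hk => ?_
  rw [cast_choose_prime_div (mem_Ioo.mp hk).1 (mem_Ioo.mp hk).2,
    val_cast_of_lt (mem_Ioo.mp hk).2, neg_neg]

end Eisenstein

theorem mem_left_half_interval_iff {n p j : ℕ} (hn : n % p ≠ 0) :
    (2 * j * p < 2 * n ∧ 2 * n < (2 * j + 1) * p) ↔ (n / p = j ∧ 2 * (n % p) < p) := by
  have hdm := Nat.div_add_mod n p
  constructor
  · rintro ⟨hlo, hhi⟩
    obtain rfl : n / p = j := Nat.div_eq_of_lt_le (by nlinarith) (by nlinarith)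
    exact ⟨rfl, by nlinarith⟩
  · rintro ⟨rfl, hr⟩
    constructor <;> nlinarith [Nat.pos_of_ne_zero hn]

theorem mem_left_half_interval_mul_iff {N p m j : ℕ} (hr : N * m % p ≠ 0) :
    (2 * j < N ∧ 2 * j * p < 2 * N * m ∧ 2 * N * m < (2 * j + 1) * p) ↔
      (N * m / p = j ∧ 2 * m < p ∧ 2 * (N * m % p) < p) := by
  simp only [mul_assoc 2 N m, mem_left_half_interval_iff hr]
  have hdm := Nat.div_add_mod (N * m) p
  constructor
  · rintro ⟨hj, rfl, hhalf⟩
    refine ⟨rfl, ?_, hhalf⟩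
    have : N * (2 * m) < N * p := by nlinarith
    exact Nat.lt_of_mul_lt_mul_left this
  · rintro ⟨rfl, hm, hhalf⟩
    refine ⟨?_, rfl, hhalf⟩
    have hN : 0 < N := Nat.pos_of_ne_zero fun h => hr (by simp [h])
    have hNm : N * (2 * m + 1) ≤ N * p := Nat.mul_le_mul_left N hm
    have : p * (2 * (N * m / p)) < p * N := by
      generalize N * m / p = d at hdm ⊢
      generalize N * m % p = r at hdm
      nlinarith
    exact Nat.lt_of_mul_lt_mul_left this

theorem sum_sum_left_half_intervals {M : Type*} [AddCommMonoid M] {N p : ℕ} (hp : p.Prime)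
    (hpN : ¬p ∣ N) (f : ℕ → M) :
    ∑ j ∈ range N with 2 * j < N,
        ∑ m ∈ Ioo 0 p with 2 * j * p < 2 * N * m ∧ 2 * N * m < (2 * j + 1) * p, f m
      = ∑ m ∈ Ioo 0 p with 2 * m < p ∧ 2 * (N * m % p) < p, f m := by
  have hr : ∀ m ∈ Ioo 0 p, N * m % p ≠ 0 := fun m hm h =>
    (hp.dvd_mul.mp (Nat.dvd_of_mod_eq_zero h)).elim hpN
      (Nat.not_dvd_of_pos_of_lt (mem_Ioo.mp hm).1 (mem_Ioo.mp hm).2)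
  calc _ = ∑ j ∈ range N with 2 * j < N,
          ∑ m ∈ {m ∈ Ioo 0 p | 2 * m < p ∧ 2 * (N * m % p) < p} with N * m / p = j, f m := by
        refine sum_congr rfl fun j hj => ?_
        rw [filter_filter]
        refine sum_congr (filter_congr fun m hm => ?_) fun _ _ => rfl
        have h := mem_left_half_interval_mul_iff (j := j) (hr m hm)
        rw [and_iff_right (mem_filter.mp hj).2] at h
        rw [h]
        tauto
    _ = _ := by
        rw [sum_fiberwise_eq_sum_filter, filter_true_of_mem]
        intro m hm
        obtain ⟨hm, hlt⟩ := mem_filter.mp hm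
        have := ((mem_left_half_interval_mul_iff (hr m hm)).mpr ⟨rfl, hlt⟩).1
        exact mem_filter.mpr ⟨mem_range.mpr (by omega), this⟩

theorem skula_dobson_ichimura_general (N p : ℕ) (hp : p.Prime) (hodd : Odd p)
    (hpN : ¬ p ∣ N) :
    ((N : ZMod p) + 1) * (((2 ^ (p - 1) - 1) / p : ℕ) : ZMod p)
    = - ∑ j ∈ (Finset.range N).filter (fun j => 2 * j < N),
        ∑ m ∈ (Finset.Ioo 0 p).filter
          (fun m : ℕ => 2 * j * p < 2 * N * m ∧ 2 * N * m < (2 * j + 1) * p),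
        ((m : ZMod p))⁻¹ := by
  have : Fact p.Prime := ⟨hp⟩
  have h2 := ZMod.two_ne_zero_of_odd hodd
  have hN : (N : ZMod p) ≠ 0 := by rwa [Ne, ZMod.natCast_eq_zero_iff]
  rw [sum_sum_left_half_intervals hp hpN, ZMod.sum_filter_Ioo_inv_natCast]
  simp only [← ZMod.val_natCast_mul]
  have hincl := sum_filter_add_sum_filter univ (fun x : ZMod p => 2 * x.val < p)
    (fun x => 2 * ((N : ZMod p) * x).val < p) (·⁻¹)
  have hreflect : ∑ x : ZMod p with ¬2 * x.val < p ∧ ¬2 * ((N : ZMod p) * x).val < p, x⁻¹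
      = -∑ x : ZMod p with 2 * x.val < p ∧ 2 * ((N : ZMod p) * x).val < p, x⁻¹ := by
    rw [← sum_inv_filter_neg]
    refine sum_inv_filter_congr fun x _ hx => ?_
    rw [mul_neg, ZMod.two_mul_val_neg_lt_iff hodd hx,
      ZMod.two_mul_val_neg_lt_iff hodd (mul_ne_zero hN hx)]
  rw [sum_inv_filter_mul_left (fun y : ZMod p => 2 * y.val < p) hN, ZMod.sum_inv_lower_half hodd,
    sum_inv_eq_zero h2, hreflect] at hincl
  apply mul_left_cancel₀ h2
  linear_combination -hincl

/-- **Theorem 4.1 (Skula–Dobson–Ichimura).** For an odd prime `p` not dividing `N`,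
`(N+1)·q_p(2) ≡ - Σ_{0 ≤ j < N/2} s_p(2j, 2N) (mod p)`, where `q_p(2) = (2^{p-1}-1)/p` is the
Fermat quotient with base `2` and `s_p(2j, 2N) = Σ_{2jp/(2N) < m < (2j+1)p/(2N)} 1/m`. -/
theorem skula_dobson_ichimura (N p : ℕ) (hN : 0 < N) (hp : p.Prime) (hodd : Odd p)
    (hpN : ¬ p ∣ N) :
    ((N : ZMod p) + 1) * (((2 ^ (p - 1) - 1) / p : ℕ) : ZMod p)
    = - ∑ j ∈ (Finset.range N).filter (fun j => 2 * j < N),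
        ∑ m ∈ (Finset.Ioo 0 p).filter
          (fun m : ℕ => 2 * j * p < 2 * N * m ∧ 2 * N * m < (2 * j + 1) * p),
        ((m : ZMod p))⁻¹ :=
  skula_dobson_ichimura_general N p hp hodd hpN
end

section
/- Let N ≥ 2 be an integer and p an odd prime not dividing N. Then in ZMod p one has N · q_p(N) ≡ Σ_{j=1}^{N−1} j · Σ_{jp/N < m < (j+1)p/N} 1/m, where q_p(N) = (N^{p−1} − 1)/p ∈ ℤ and the inner sums of reciprocals of integers m in the open interval (jp/N, (j+1)p/N) are rational numbers with denominator coprime to p viewed in ZMod p. -/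
/-!
Write `N m = r_m + p k_m` with `r_m = N m % p` and `k_m = ⌊N m / p⌋`. In `ZMod (p ^ 2)`, where
`p * p = 0`, this reads `N m = r_m (1 + p k_m / r_m)`; multiplying over `0 < m < p`, and using that
`m ↦ r_m` permutes `1, …, p - 1`, gives `N ^ (p - 1) = 1 + p Σ k_m / r_m`. Comparing with
`N ^ (p - 1) = 1 + p q_p(N)` yields `q_p(N) ≡ Σ k_m / (N m) (mod p)`, and grouping the `m` by the
value `j = k_m` gives Lerch's formula.
-/

open Finset

theorem Finset.prod_one_add_mul_of_mul_self_eq_zero {ι R : Type*} [CommSemiring R] {ε : R}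
    (hε : ε * ε = 0) (s : Finset ι) (x : ι → R) :
    ∏ i ∈ s, (1 + ε * x i) = 1 + ε * ∑ i ∈ s, x i := by
  classical
  induction s using Finset.induction_on with
  | empty => simp
  | insert a s ha ih =>
    rw [prod_insert ha, sum_insert ha, ih]
    calc (1 + ε * x a) * (1 + ε * ∑ i ∈ s, x i)
        = 1 + ε * (x a + ∑ i ∈ s, x i) + ε * ε * (x a * ∑ i ∈ s, x i) := by ring
      _ = 1 + ε * (x a + ∑ i ∈ s, x i) := by rw [hε, zero_mul, add_zero]

theorem ZMod.castHom_eq_zero_of_natCast_mul_eq_zero {n : ℕ} (hn : n ≠ 0) {x : ZMod (n ^ 2)}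
    (h : (n : ZMod (n ^ 2)) * x = 0) :
    ZMod.castHom (dvd_pow_self n two_ne_zero) (ZMod n) x = 0 := by
  have : NeZero (n ^ 2) := ⟨pow_ne_zero 2 hn⟩
  rw [← ZMod.natCast_zmod_val x, ← Nat.cast_mul, ZMod.natCast_eq_zero_iff] at h
  rw [← ZMod.natCast_zmod_val x, map_natCast, ZMod.natCast_eq_zero_iff]
  exact Nat.dvd_of_mul_dvd_mul_left (Nat.pos_of_ne_zero hn) (by rwa [← pow_two])

theorem ZMod.castHom_natCast_inv {m n : ℕ} (h : m ∣ n) {a : ℕ} (ha : a.Coprime n) :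
    ZMod.castHom h (ZMod m) (a : ZMod n)⁻¹ = (a : ZMod m)⁻¹ := by
  refine (ZMod.inv_eq_of_mul_eq_one m _ _ ?_).symm
  rw [← map_natCast (ZMod.castHom h (ZMod m)) a, ← map_mul, ZMod.coe_mul_inv_eq_one a ha,
    map_one]

theorem Nat.div_eq_iff_of_not_dvd {a p j : ℕ} (hp : 0 < p) (h : ¬ p ∣ a) :
    a / p = j ↔ j * p < a ∧ a < (j + 1) * p := by
  have hne : a ≠ j * p := fun e => h (e ▸ Dvd.intro_left j rfl)
  rw [Nat.div_eq_iff hp, add_one_mul]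
  omega

theorem Nat.mul_mod_mem_Ico {N p m : ℕ} (hNp : N.Coprime p) (hm : m ∈ Ico 1 p) :
    N * m % p ∈ Ico 1 p := by
  rw [mem_Ico] at hm ⊢
  refine ⟨Nat.pos_of_ne_zero fun h0 => ?_, Nat.mod_lt _ (by omega)⟩
  have := Nat.le_of_dvd (by omega) (hNp.symm.dvd_of_dvd_mul_left (Nat.dvd_of_mod_eq_zero h0))
  omega

theorem Nat.prod_Ico_mul_mod {M : Type*} [CommMonoid M] {N p : ℕ} (hNp : N.Coprime p)
    (f : ℕ → M) : ∏ m ∈ Ico 1 p, f (N * m % p) = ∏ m ∈ Ico 1 p, f m := by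
  have hinj : Set.InjOn (fun m => N * m % p) (Ico 1 p) := by
    intro a ha b hb hab
    simp only [coe_Ico, Set.mem_Ico] at ha hb
    exact Nat.ModEq.eq_of_lt_of_lt (Nat.ModEq.cancel_left_of_coprime hNp.symm hab) ha.2 hb.2
  have hmaps : ∀ m ∈ Ico 1 p, N * m % p ∈ Ico 1 p := fun m hm => Nat.mul_mod_mem_Ico hNp hm
  exact prod_nbij _ hmaps hinj (surjOn_of_injOn_of_card_le _ hmaps hinj le_rfl) fun _ _ => rfl

theorem Nat.pow_card_sub_one_eq_one_add_mul {N p : ℕ} (hp : p.Prime) (hNp : N.Coprime p) :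
    N ^ (p - 1) = 1 + p * ((N ^ (p - 1) - 1) / p) := by
  have hdvd := Nat.dvd_of_mod_eq_zero (Nat.pow_card_sub_one_sub_one_mod_card hp hNp)
  have hN : N ≠ 0 := by rintro rfl; exact hp.one_lt.ne' (Nat.coprime_zero_left _ |>.mp hNp)
  have := Nat.one_le_pow (p - 1) N (Nat.pos_of_ne_zero hN)
  rw [Nat.mul_div_cancel' hdvd]
  omega

theorem Nat.coprime_pow_of_mem_Ico {p m : ℕ} (hp : p.Prime) (hm : m ∈ Ico 1 p) (k : ℕ) :
    m.Coprime (p ^ k) :=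
  have hm := mem_Ico.mp hm
  (Nat.coprime_of_lt_prime (by omega) hm.2 hp).symm.pow_right k

theorem ZMod.pow_card_sub_one_mul_prod_Ico {N p : ℕ} (hp : p.Prime) (hNp : N.Coprime p) :
    (N : ZMod (p ^ 2)) ^ (p - 1) * ∏ m ∈ Ico 1 p, (m : ZMod (p ^ 2)) =
      (∏ m ∈ Ico 1 p, (m : ZMod (p ^ 2))) * (1 + p * ∑ m ∈ Ico 1 p,
        ((N * m / p : ℕ) : ZMod (p ^ 2)) * ((N * m % p : ℕ) : ZMod (p ^ 2))⁻¹) := by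
  have hε : (p : ZMod (p ^ 2)) * p = 0 := by rw [← Nat.cast_mul, ← pow_two, ZMod.natCast_self]
  have hfactor : ∀ m ∈ Ico 1 p, (N : ZMod (p ^ 2)) * m = (N * m % p : ℕ) *
      (1 + p * ((N * m / p : ℕ) * ((N * m % p : ℕ) : ZMod (p ^ 2))⁻¹)) := by
    intro m hm
    have hdecomp := congrArg (Nat.cast : ℕ → ZMod (p ^ 2)) (Nat.mod_add_div (N * m) p)
    have hinv := ZMod.coe_mul_inv_eq_one _
      (Nat.coprime_pow_of_mem_Ico hp (Nat.mul_mod_mem_Ico hNp hm) 2)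
    push_cast at hdecomp
    linear_combination -hdecomp - ((p : ZMod (p ^ 2)) * ((N * m / p : ℕ) : ZMod (p ^ 2))) * hinv
  calc (N : ZMod (p ^ 2)) ^ (p - 1) * ∏ m ∈ Ico 1 p, (m : ZMod (p ^ 2))
      = ∏ m ∈ Ico 1 p, (N : ZMod (p ^ 2)) * m := by
        rw [prod_mul_distrib, prod_const, Nat.card_Ico]
    _ = _ := by
        rw [prod_congr rfl hfactor, prod_mul_distrib, prod_one_add_mul_of_mul_self_eq_zero hε,
          Nat.prod_Ico_mul_mod hNp fun a => (a : ZMod (p ^ 2))]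

theorem ZMod.natCast_fermatQuotient_eq_sum {N p : ℕ} [Fact p.Prime] (hNp : N.Coprime p) :
    (((N ^ (p - 1) - 1) / p : ℕ) : ZMod p) =
      ∑ m ∈ Ico 1 p, ((N * m / p : ℕ) : ZMod p) * ((N : ZMod p) * m)⁻¹ := by
  have hp : p.Prime := Fact.out
  let π := ZMod.castHom (dvd_pow_self p two_ne_zero) (ZMod p)
  set P : ZMod (p ^ 2) := ∏ m ∈ Ico 1 p, (m : ZMod (p ^ 2))
  set S : ZMod (p ^ 2) := ∑ m ∈ Ico 1 p,
    ((N * m / p : ℕ) : ZMod (p ^ 2)) * ((N * m % p : ℕ) : ZMod (p ^ 2))⁻¹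
  have hq : (N : ZMod (p ^ 2)) ^ (p - 1) = 1 + p * ((N ^ (p - 1) - 1) / p : ℕ) := by
    exact_mod_cast congrArg Nat.cast (Nat.pow_card_sub_one_eq_one_add_mul hp hNp)
  have hzero : π (P * (((N ^ (p - 1) - 1) / p : ℕ) - S)) = 0 :=
    ZMod.castHom_eq_zero_of_natCast_mul_eq_zero hp.ne_zero <| by
      linear_combination ZMod.pow_card_sub_one_mul_prod_Ico hp hNp - P * hq
  have hP : π P = -1 := by
    simp only [P, map_prod, map_natCast, ZMod.prod_Ico_one_prime]
  have hS : π S = ∑ m ∈ Ico 1 p, ((N * m / p : ℕ) : ZMod p) * ((N : ZMod p) * m)⁻¹ := by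
    refine (map_sum _ _ _).trans (sum_congr rfl fun m hm => ?_)
    rw [map_mul, map_natCast, ZMod.castHom_natCast_inv _
      (Nat.coprime_pow_of_mem_Ico hp (Nat.mul_mod_mem_Ico hNp hm) 2), ZMod.natCast_mod,
      Nat.cast_mul]
  rwa [map_mul, map_sub, hP, hS, map_natCast, neg_one_mul, neg_eq_zero, sub_eq_zero] at hzero

theorem Finset.sum_natCast_div_mul_eq_sum_Ico {R : Type*} [NonAssocSemiring R] {N p : ℕ}
    {s : Finset ℕ} (hs : ∀ m ∈ s, m < p ∧ ¬ p ∣ N * m) (g : ℕ → R) :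
    ∑ m ∈ s, ((N * m / p : ℕ) : R) * g m =
      ∑ j ∈ Ico 1 N, (j : R) * ∑ m ∈ s with j * p < N * m ∧ N * m < (j + 1) * p, g m := by
  have hfloor : ∀ j, ∀ m ∈ s, N * m / p = j ↔ j * p < N * m ∧ N * m < (j + 1) * p :=
    fun j m hm => Nat.div_eq_iff_of_not_dvd (by have := (hs m hm).1; omega) (hs m hm).2
  have hmaps : ∀ m ∈ s, N * m / p ∈ range N := by
    intro m hm
    obtain ⟨hmp, hdvd⟩ := hs m hm
    have hN : 0 < N := Nat.pos_of_ne_zero (by rintro rfl; simp at hdvd)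
    exact mem_range.mpr <| Nat.div_lt_of_lt_mul <| by
      rw [mul_comm p]; exact Nat.mul_lt_mul_of_pos_left hmp hN
  rw [← sum_fiberwise_of_maps_to hmaps, sum_subset (s₁ := Ico 1 N) (s₂ := range N)
    (fun j hj => by simp only [mem_Ico, mem_range] at hj ⊢; omega)]
  · refine sum_congr rfl fun j _ => ?_
    rw [← filter_congr (hfloor j), mul_sum]
    exact sum_congr rfl fun m hm => by rw [(mem_filter.mp hm).2]
  · intro j hjN hj
    obtain rfl : j = 0 := by simp only [mem_Ico, mem_range] at hjN hj; omega
    rw [Nat.cast_zero, zero_mul]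

theorem lerch_general (N p : ℕ) (hp : p.Prime) (hpN : ¬ p ∣ N) :
    (N : ZMod p) * (((N ^ (p - 1) - 1) / p : ℕ) : ZMod p)
    = ∑ j ∈ Finset.Ico 1 N, (j : ZMod p) *
        ∑ m ∈ (Finset.Ioo 0 p).filter
          (fun m : ℕ => j * p < N * m ∧ N * m < (j + 1) * p),
        ((m : ZMod p))⁻¹ := by
  have : Fact p.Prime := ⟨hp⟩
  have hNp : N.Coprime p := Nat.coprime_comm.mp (hp.coprime_iff_not_dvd.mpr hpN)
  have hN : (N : ZMod p) ≠ 0 := by rwa [Ne, ZMod.natCast_eq_zero_iff]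
  rw [ZMod.natCast_fermatQuotient_eq_sum hNp, mul_sum, ← sum_natCast_div_mul_eq_sum_Ico,
    ← Ico_add_one_left_eq_Ioo, zero_add]
  · exact sum_congr rfl fun m _ => by rw [mul_inv, mul_left_comm, mul_inv_cancel_left₀ hN]
  · intro m hm
    rw [mem_Ioo] at hm
    exact ⟨hm.2, fun h => Nat.not_dvd_of_pos_of_lt hm.1 hm.2 (hNp.symm.dvd_of_dvd_mul_left h)⟩

/-- **Theorem 4.2 (Lerch).** For `N ≥ 2` and an odd prime `p` not dividing `N`,
`N·q_p(N) ≡ Σ_{j=1}^{N-1} j·s_p(j,N) (mod p)`, where `q_p(N) = (N^{p-1}-1)/p` is the Fermat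
quotient with base `N` and `s_p(j,N) = Σ_{jp/N < m < (j+1)p/N} 1/m`. -/
theorem lerch (N p : ℕ) (hN : 2 ≤ N) (hp : p.Prime) (hodd : Odd p) (hpN : ¬ p ∣ N) :
    (N : ZMod p) * (((N ^ (p - 1) - 1) / p : ℕ) : ZMod p)
    = ∑ j ∈ Finset.Ico 1 N, (j : ZMod p) *
        ∑ m ∈ (Finset.Ioo 0 p).filter
          (fun m : ℕ => j * p < N * m ∧ N * m < (j + 1) * p),
        ((m : ZMod p))⁻¹ :=
  lerch_general N p hp hpN
end

section
/- The following two statements are equivalent: (a) there exists an integer M such that for every prime p ≥ 5 there is an odd integer k with 3 ≤ k ≤ M, k < p, and the image of the Bernoulli number B_{p−k} in ZMod p nonzero; (b) there exists an integer M ≥ 5 such that the set {p prime : p > M and for every odd integer k with 3 ≤ k ≤ M, the image of B_{p−k} in ZMod p is zero} is finite. -/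
/-- The image in `ZMod n` of a rational number `q` whose denominator is coprime to `n`:
numerator times the inverse of the denominator. -/
noncomputable def ratImage (n : ℕ) (q : ℚ) : ZMod n :=
  (q.num : ZMod n) * ((q.den : ZMod n))⁻¹

lemma ratImage_bernoulli_two_ne_zero (p : ℕ) (hp : p.Prime) (h5 : 5 ≤ p) :
    ratImage p (bernoulli 2) ≠ 0 := by
  haveI : Fact p.Prime := ⟨hp⟩
  have hb : (bernoulli 2 : ℚ) = 1/6 := by
    rw [bernoulli_eq_bernoulli'_of_ne_one (by norm_num), bernoulli'_two]
  have h6 : ((6 : ℕ) : ZMod p) ≠ 0 := by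
    rw [Ne, ZMod.natCast_eq_zero_iff]
    intro hdvd
    have := Nat.le_of_dvd (by norm_num) hdvd
    interval_cases p <;> first | omega | exact absurd hp (by norm_num)
  rw [ratImage, hb]
  norm_num
  exact_mod_cast h6

/-- **Lemma 5.9.** There is a uniform bound `M` with `ð_p ≤ M` for all primes `p ≥ 5`
(i.e. every prime `p ≥ 5` admits some odd `k` with `3 ≤ k ≤ M`, `k < p` and `p ∤ B_{p-k}`)
if and only if there is an integer `M ≥ 5` such that the set of primes `p > M` lying in all
the sets `I(k) = {p prime : p ∣ B_{p-k}}` for odd `3 ≤ k ≤ M` is finite. -/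
theorem uniform_eth_bound_iff :
    (∃ M : ℕ, ∀ p : ℕ, p.Prime → 5 ≤ p →
      ∃ k : ℕ, Odd k ∧ 3 ≤ k ∧ k ≤ M ∧ k < p ∧ ratImage p (bernoulli (p - k)) ≠ 0)
    ↔ (∃ M : ℕ, 5 ≤ M ∧
      {p : ℕ | p.Prime ∧ M < p ∧ ∀ k : ℕ, Odd k → 3 ≤ k → k ≤ M →
        ratImage p (bernoulli (p - k)) = 0}.Finite) := by
  constructor
  · rintro ⟨M, hM⟩
    refine ⟨max M 5, le_max_right _ _, ?_⟩
    convert Set.finite_empty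
    ext p
    simp only [Set.mem_setOf_eq, Set.mem_empty_iff_false, iff_false, not_and]
    intro hp hpM hall
    have h5 : 5 ≤ p := ((le_max_right M 5).trans_lt hpM).le
    obtain ⟨k, hk1, hk2, hk3, hk4, hk5⟩ := hM p hp h5
    exact hk5 (hall k hk1 hk2 (le_trans hk3 (le_max_left _ _)))
  · rintro ⟨M, hM5, hfin⟩
    set S := {p : ℕ | p.Prime ∧ M < p ∧ ∀ k : ℕ, Odd k → 3 ≤ k → k ≤ M →
        ratImage p (bernoulli (p - k)) = 0} with hS
    refine ⟨max M (hfin.toFinset.sup id), fun p hp h5 => ?_⟩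
    have hpodd : Odd p := hp.odd_of_ne_two (by omega)
    have hwit : ∀ N : ℕ, p - 2 ≤ N →
        ∃ k : ℕ, Odd k ∧ 3 ≤ k ∧ k ≤ N ∧ k < p ∧ ratImage p (bernoulli (p - k)) ≠ 0 := by
      intro N hN
      refine ⟨p - 2, Nat.Odd.sub_even (by omega) hpodd (by norm_num), by omega, hN, by omega, ?_⟩
      have h2 : p - (p - 2) = 2 := by omega
      rw [h2]
      exact ratImage_bernoulli_two_ne_zero p hp h5
    by_cases hpS : p ∈ S
    · have hle : p ≤ hfin.toFinset.sup id :=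
        Finset.le_sup (f := id) (hfin.mem_toFinset.mpr hpS)
      exact hwit _ (le_trans (le_trans (by omega) hle) (le_max_right _ _))
    · by_cases hpM : p ≤ M
      · exact hwit _ (le_trans (by omega) (le_max_left _ _))
      · rw [hS, Set.mem_setOf_eq, not_and, not_and] at hpS
        have := hpS hp (by omega)
        push_neg at this
        obtain ⟨k, hk1, hk2, hk3, hk4⟩ := this
        exact ⟨k, hk1, hk2, le_trans hk3 (le_max_left _ _), by omega, hk4⟩
end

section
/- Let k₁, k₂ be positive integers with k = k₁ + k₂, and let p be a prime with p > k + 2. Then in ZMod p one has Σ_{0 < m₁ < m₂ < p} 1/(m₁^{k₁} m₂^{k₂}) = (−1)^{k₂} · binomial(k₁+k₂, k₁) · B_{p−k}/k, where B_{p−k} is the (p−k)-th Bernoulli number, whose denominator is coprime to p (since p−1 ∤ p−k), so both sides are well-defined images of rational numbers in ZMod p. (When p−k is odd and greater than 1, B_{p−k} = 0 in either sign convention, so the convention is immaterial.) -/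
/-!
Over `ZMod p` one has `(m ^ k)⁻¹ = m ^ (p - 1 - k)`, so the double sum becomes
`Σ_{0<m₂<p} m₂ ^ b Σ_{0<m₁<m₂} m₁ ^ a` with `a = p - 1 - k₁`, `b = p - 1 - k₂`. Faulhaber's
formula evaluates the inner sum as a polynomial in `m₂` whose coefficients are Bernoulli numbers
`B_i` with `i ≤ a < p - 1`; these are `p`-integral, so the formula survives reduction mod `p`.
Summing over `m₂`, the power sum `Σ_{0<m<p} m ^ e` is `-1` when `p - 1 ∣ e` and `0` otherwise, and
for the exponents at hand this singles out the term `i = p - k`. The resulting binomial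
coefficient `C(p - k₁, k₂)` is `(-1) ^ k₂ C(k - 1, k₂)` mod `p`.
-/

open Finset

theorem Nat.add_mul_choose_add_sub_one {k₁ : ℕ} (h₁ : 0 < k₁) (k₂ : ℕ) :
    (k₁ + k₂) * (k₁ + k₂ - 1).choose k₂ = (k₁ + k₂).choose k₁ * k₁ := by
  obtain ⟨j, rfl⟩ := Nat.exists_eq_add_of_lt h₁
  rw [show 0 + j + 1 + k₂ - 1 = j + k₂ by omega, ← Nat.choose_symm_add,
    show 0 + j + 1 + k₂ = j + k₂ + 1 by omega, Nat.add_one_mul_choose_eq]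
  ring_nf

theorem Finset.sum_Ioo_pow_eq_sum_range_pow {R : Type*} [Semiring R] {a : ℕ} (ha : a ≠ 0) (n : ℕ) :
    ∑ i ∈ Ioo 0 n, (i : R) ^ a = ∑ i ∈ range n, (i : R) ^ a := by
  refine sum_subset (fun i hi => mem_range.mpr (mem_Ioo.mp hi).2) fun i hi hi' => ?_
  obtain rfl : i = 0 := by
    simp only [mem_range, mem_Ioo] at hi hi'
    omega
  rw [Nat.cast_zero, zero_pow ha]

theorem Finset.sum_filter_lt_product_Ioo {M : Type*} [AddCommMonoid M] (n : ℕ) (f : ℕ × ℕ → M) :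
    ∑ x ∈ (Ioo 0 n ×ˢ Ioo 0 n).filter (fun x : ℕ × ℕ => x.1 < x.2), f x
      = ∑ j ∈ Ioo 0 n, ∑ i ∈ Ioo 0 j, f (i, j) := by
  rw [sum_filter, sum_product_right]
  refine sum_congr rfl fun j hj => ?_
  rw [← sum_filter]
  congr 1
  ext i
  simp only [mem_filter, mem_Ioo] at hj ⊢
  omega

namespace ZMod

theorem natCast_ne_zero_of_pos_of_lt {n m : ℕ} (h₀ : 0 < m) (h : m < n) : (m : ZMod n) ≠ 0 := by
  rw [Ne, natCast_eq_zero_iff]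
  exact Nat.not_dvd_of_pos_of_lt h₀ h

theorem descFactorial_sub_eq (n r s : ℕ) (hr : r ≤ n) :
    ((n - r).descFactorial s : ZMod n) = (-1) ^ s * r.ascFactorial s := by
  rw [← descPochhammer_eval_eq_descFactorial, Nat.cast_sub hr, natCast_self, zero_sub,
    Nat.cast_ascFactorial, ← neg_neg (r : ZMod n), ascPochhammer_eval_neg_eq_descPochhammer,
    neg_neg, ← mul_assoc, ← mul_pow, neg_one_mul, neg_neg, one_pow, one_mul]

variable {p : ℕ} [Fact p.Prime]

theorem choose_sub_eq {r s : ℕ} (hr : r ≤ p) (hs : s < p) :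
    ((p - r).choose s : ZMod p) = (-1) ^ s * (r + s - 1).choose s := by
  have hfac : (s.factorial : ZMod p) ≠ 0 := by
    rw [Ne, natCast_eq_zero_iff, Nat.Prime.dvd_factorial Fact.out]
    omega
  refine mul_left_cancel₀ hfac ?_
  rw [← Nat.cast_mul, ← Nat.descFactorial_eq_factorial_mul_choose, descFactorial_sub_eq p r s hr,
    Nat.ascFactorial_eq_factorial_mul_choose']
  push_cast
  ring

theorem inv_pow_eq_pow_sub {k : ℕ} (hk₀ : k ≠ 0) (hk : k < p - 1) (x : ZMod p) :
    (x ^ k)⁻¹ = x ^ (p - 1 - k) := by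
  rcases eq_or_ne x 0 with rfl | hx
  · rw [zero_pow hk₀, inv_zero, zero_pow (by omega)]
  · refine inv_eq_of_mul_eq_one_right ?_
    rw [← pow_add, Nat.add_sub_cancel' hk.le, pow_card_sub_one_eq_one hx]

variable (p) in
theorem sum_Ioo_pow (e : ℕ) :
    ∑ m ∈ Ioo 0 p, (m : ZMod p) ^ e = if p - 1 ∣ e then -1 else 0 := by
  have hunits : ∑ m ∈ Ioo 0 p, (m : ZMod p) ^ e = ∑ u : (ZMod p)ˣ, (u : ZMod p) ^ e :=
    sum_bij' (fun m hm =>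
        Units.mk0 (m : ZMod p) (natCast_ne_zero_of_pos_of_lt (mem_Ioo.mp hm).1 (mem_Ioo.mp hm).2))
      (fun u _ => (u : ZMod p).val) (fun _ _ => mem_univ _)
      (fun u _ => mem_Ioo.mpr ⟨val_pos.mpr u.ne_zero, val_lt _⟩)
      (fun m hm => by simp [val_cast_of_lt (mem_Ioo.mp hm).2])
      (fun u _ => Units.ext (natCast_zmod_val _)) (fun _ _ => rfl)
  rw [hunits, FiniteField.sum_pow_units, card]

end ZMod

namespace Rat

variable {p : ℕ} [Fact p.Prime]

theorem natCast_den_ne_zero_of_mem_integer {x : ℚ} (hx : x ∈ (padicValuation p).integer) :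
    (x.den : ZMod p) ≠ 0 := by
  rw [Ne, ZMod.natCast_eq_zero_iff]
  exact padicValuation_le_one_iff.mp hx

theorem padicValuation_natCast_eq_one {n : ℕ} (hn : ¬ p ∣ n) : padicValuation p n = 1 := by
  rw [← Int.cast_natCast, padicValuation_cast, Int.padicValuation_eq_one_iff]
  exact_mod_cast hn

variable (p) in
noncomputable def padicIntegerToZMod : (padicValuation p).integer →+* ZMod p where
  toFun x := ((x : ℚ) : ZMod p)
  map_one' := by simp
  map_zero' := by simp
  map_add' x y := by
    exact_mod_cast cast_add_of_ne_zero (natCast_den_ne_zero_of_mem_integer x.2)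
      (natCast_den_ne_zero_of_mem_integer y.2)
  map_mul' x y := by
    exact_mod_cast cast_mul_of_ne_zero (natCast_den_ne_zero_of_mem_integer x.2)
      (natCast_den_ne_zero_of_mem_integer y.2)

theorem cast_sum_mul_natCast_of_mem_integer {ι : Type*} {s : Finset ι} {f : ι → ℚ}
    (hf : ∀ i ∈ s, f i ∈ (padicValuation p).integer) (c : ι → ℕ) :
    ((∑ i ∈ s, f i * c i : ℚ) : ZMod p) = ∑ i ∈ s, (f i : ZMod p) * c i := by
  have hlift : ∑ i ∈ s, f i * c i
      = ((∑ i ∈ s.attach, ⟨f i, hf i i.2⟩ * (c i : (padicValuation p).integer) :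
          (padicValuation p).integer) : ℚ) := by
    push_cast
    rw [sum_attach s fun i => f i * c i]
  rw [hlift, ← sum_attach s fun i => (f i : ZMod p) * c i]
  exact (map_sum (padicIntegerToZMod p) _ _).trans
    (sum_congr rfl fun i _ => by rw [map_mul, map_natCast]; rfl)

end Rat

theorem ratImage_eq_cast {p : ℕ} [Fact p.Prime] (q : ℚ) : ratImage p q = (q : ZMod p) := by
  rw [ratImage, Rat.cast_def, div_eq_mul_inv]

open Rat in
theorem bernoulli_mem_padicValuation_integer {p : ℕ} [Fact p.Prime] {m : ℕ} (hm : m + 1 < p) :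
    bernoulli m ∈ (padicValuation p).integer := by
  induction m using Nat.strong_induction_on with
  | _ m ih =>
    have hrec : ((m + 1 : ℕ) : ℚ) * bernoulli m
        = (if m + 1 = 1 then 1 else 0) - ∑ i ∈ range m, ((m + 1).choose i : ℚ) * bernoulli i := by
      rw [eq_sub_iff_add_eq, ← sum_bernoulli, sum_range_succ, Nat.choose_succ_self_right, add_comm]
    have hmem : ((m + 1 : ℕ) : ℚ) * bernoulli m ∈ (padicValuation p).integer := by
      rw [hrec]
      refine sub_mem (by split_ifs <;> simp) (sum_mem fun i hi => mul_mem (natCast_mem _ _) ?_)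
      exact ih i (mem_range.mp hi) (by grind)
    rwa [Valuation.mem_integer_iff, map_mul,
      padicValuation_natCast_eq_one (Nat.not_dvd_of_pos_of_lt m.succ_pos hm), one_mul] at hmem

namespace ZMod

variable {p : ℕ} [Fact p.Prime]

theorem natCast_mul_sum_range_pow {a : ℕ} (ha : a + 1 < p) (n : ℕ) :
    ((a + 1 : ℕ) : ZMod p) * ∑ m ∈ range n, (m : ZMod p) ^ a
      = ∑ i ∈ range (a + 1), (bernoulli i : ZMod p) * ((a + 1).choose i * n ^ (a + 1 - i) : ℕ) := by
  have hQ : ((((a + 1) * ∑ m ∈ range n, m ^ a : ℕ) : ℚ) : ZMod p)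
      = ((∑ i ∈ range (a + 1), bernoulli i * ((a + 1).choose i * n ^ (a + 1 - i) : ℕ) : ℚ) :
          ZMod p) := by
    congr 1
    push_cast
    rw [sum_range_pow, mul_sum]
    refine sum_congr rfl fun i _ => ?_
    field_simp
  rw [Rat.cast_natCast, Rat.cast_sum_mul_natCast_of_mem_integer
    fun i hi => bernoulli_mem_padicValuation_integer (by grind)] at hQ
  exact_mod_cast hQ

theorem natCast_mul_sum_Ioo_sum_Ioo_pow {a : ℕ} (ha₀ : a ≠ 0) (ha : a + 1 < p) (b : ℕ) :
    ((a + 1 : ℕ) : ZMod p) * ∑ j ∈ Ioo 0 p, ∑ i ∈ Ioo 0 j, (i : ZMod p) ^ a * (j : ZMod p) ^ b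
      = ∑ i ∈ range (a + 1), (bernoulli i : ZMod p) * (a + 1).choose i *
          if p - 1 ∣ b + (a + 1 - i) then -1 else 0 := by
  simp_rw [← sum_mul, sum_Ioo_pow_eq_sum_range_pow ha₀, mul_sum, ← mul_assoc,
    natCast_mul_sum_range_pow ha, sum_mul]
  rw [sum_comm]
  refine sum_congr rfl fun i _ => ?_
  rw [← sum_Ioo_pow, mul_sum]
  refine sum_congr rfl fun j _ => ?_
  push_cast
  ring

theorem natCast_mul_sum_Ioo_sum_Ioo_pow_sub {k₁ k₂ : ℕ} (h₁ : 0 < k₁) (h₂ : 0 < k₂)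
    (hkp : k₁ + k₂ + 2 < p) :
    (k₁ : ZMod p) * ∑ j ∈ Ioo 0 p, ∑ i ∈ Ioo 0 j,
        (i : ZMod p) ^ (p - 1 - k₁) * (j : ZMod p) ^ (p - 1 - k₂)
      = (bernoulli (p - k₁ - k₂) : ZMod p) * (-1) ^ k₂ * (k₁ + k₂ - 1).choose k₂ := by
  have hsum := natCast_mul_sum_Ioo_sum_Ioo_pow (p := p) (a := p - 1 - k₁) (by omega) (by omega)
    (p - 1 - k₂)
  -- The exponent `2p - 1 - k - i` lies strictly between `0` and `2(p - 1)`,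
  -- so only `i = p - k` contributes.
  rw [sum_eq_single_of_mem (p - k₁ - k₂) (mem_range.mpr (by omega)) fun i hi hne => by
      rw [if_neg, mul_zero]
      intro hdvd
      have := Nat.eq_of_dvd_of_lt_two_mul (by omega) hdvd (by omega)
      have := mem_range.mp hi
      omega,
    if_pos (by rw [show p - 1 - k₂ + (p - 1 - k₁ + 1 - (p - k₁ - k₂)) = p - 1 by omega]),
    show p - 1 - k₁ + 1 = p - k₁ by omega, Nat.choose_symm (by omega),
    choose_sub_eq (by omega) (by omega), Nat.cast_sub (by omega), natCast_self, zero_sub] at hsum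
  linear_combination -hsum

end ZMod

/-- **The Vandiver–Hoffman–Zhao congruence (equation (3.1)), prime-by-prime.** For positive
integers `k₁, k₂` with `k = k₁ + k₂` and a prime `p > k + 2`, the truncated double harmonic
sum `Σ_{0<m₁<m₂<p} 1/(m₁^{k₁} m₂^{k₂})` equals `(-1)^{k₂}·C(k₁+k₂,k₁)·B_{p-k}/k` in
`ZMod p`. -/
theorem vandiver_hoffman_zhao (k₁ k₂ p : ℕ) (h₁ : 0 < k₁) (h₂ : 0 < k₂)
    (hp : p.Prime) (hkp : k₁ + k₂ + 2 < p) :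
    (∑ x ∈ ((Finset.Ioo 0 p) ×ˢ (Finset.Ioo 0 p)).filter (fun x : ℕ × ℕ => x.1 < x.2),
      ((x.1 : ZMod p) ^ k₁)⁻¹ * ((x.2 : ZMod p) ^ k₂)⁻¹)
    = (-1) ^ k₂ * ((k₁ + k₂).choose k₁ : ZMod p) *
        (ratImage p (bernoulli (p - (k₁ + k₂))) * (((k₁ + k₂ : ℕ) : ZMod p))⁻¹) := by
  have := Fact.mk hp
  rw [sum_filter_lt_product_Ioo]
  simp only [ZMod.inv_pow_eq_pow_sub h₁.ne' (by omega : k₁ < p - 1),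
    ZMod.inv_pow_eq_pow_sub h₂.ne' (by omega : k₂ < p - 1)]
  have hsum := ZMod.natCast_mul_sum_Ioo_sum_Ioo_pow_sub h₁ h₂ hkp
  have hchoose := congrArg (Nat.cast : ℕ → ZMod p) (Nat.add_mul_choose_add_sub_one h₁ k₂)
  push_cast at hchoose
  rw [ratImage_eq_cast, show p - (k₁ + k₂) = p - k₁ - k₂ by omega, ← mul_assoc,
    eq_mul_inv_iff_mul_eq₀ (ZMod.natCast_ne_zero_of_pos_of_lt (by omega) (by omega))]
  refine mul_left_cancel₀ (ZMod.natCast_ne_zero_of_pos_of_lt h₁ (by omega)) ?_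
  push_cast
  linear_combination (k₁ + k₂ : ZMod p) * hsum
    + (bernoulli (p - k₁ - k₂) : ZMod p) * (-1) ^ k₂ * hchoose
end
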